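/- arXiv:1809.06522 — 5 statements merged into one kernel-verified Lean document; each statement's English description precedes it below -/
import Mathlib

section
/- For every integer n ≥ 1, every integer k ≥ 2, and every probability vector P ∈ M_k with all p_i > 0, the variance of the KL divergence of the empirical distribution from the true distribution satisfies Var[D(P̂_{n,k}‖P)] ≤ 6·(3 + log k)²/n. -/
/-- The empirical distribution of `n` samples `ω : Fin n → Fin k`. -/
noncomputable def empDist {n k : ℕ} (ω : Fin n → Fin k) (i : Fin k) : ℝ :=
  ((Finset.univ.filter (fun j => ω j = i)).card : ℝ) / n

open Classical in
/-- Probability of the event `E` under `n` i.i.d. samples from the distribution `p` on `Fin k`. -/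
noncomputable def probOf {n k : ℕ} (p : Fin k → ℝ) (E : Set (Fin n → Fin k)) : ℝ :=
  ∑ ω : Fin n → Fin k, if ω ∈ E then ∏ j, p (ω j) else 0

/-- Kullback–Leibler divergence `D(q ‖ p)` (with the convention `0 · log 0 = 0`,
which holds automatically since `Real.log 0 = 0`). -/
noncomputable def klDiv {k : ℕ} (q p : Fin k → ℝ) : ℝ :=
  ∑ i, q i * Real.log (q i / p i)

/-- Expectation of `f` under `n` i.i.d. samples from the distribution `p` on `Fin k`. -/
noncomputable def expect {n k : ℕ} (p : Fin k → ℝ) (f : (Fin n → Fin k) → ℝ) : ℝ :=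
  ∑ ω : Fin n → Fin k, (∏ j, p (ω j)) * f ω

/-- Variance of `f` under `n` i.i.d. samples from the distribution `p` on `Fin k`. -/
noncomputable def var {n k : ℕ} (p : Fin k → ℝ) (f : (Fin n → Fin k) → ℝ) : ℝ :=
  expect p (fun ω => (f ω - expect p f) ^ 2)

/-!
By the Efron–Stein inequality, the variance is at most half the sum, over the `n` samples, of
the expected squared change of `D(P̂ ‖ P)` when that sample is redrawn. Redrawing it changes the
summands of at most two symbols; if `mᵢ` counts symbol `i` among the other samples, `n` times the
change caused by one more occurrence of `i` lies between `-log⁺ (n pᵢ / (mᵢ + 1))` and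
`1 - log pᵢ`. As `log² y ≤ 4 y` for `y ≥ 1` and `E[n pᵢ / (mᵢ + 1)] ≤ 1`, each sample contributes
at most `2 (4 + ∑ pᵢ (1 - log pᵢ)²) / n²`, and Jensen's inequality for the concave function
`u ↦ (1 + log u)²` on `[1, ∞)` at the points `1 / pᵢ` bounds the sum by `(1 + log k)²`. Hence
the variance is at most `(4 + (1 + log k)²) / n`.
-/

open Finset hiding expect
open Real

section Expectation

variable {k n : ℕ} {p : Fin k → ℝ}

lemma expect_add (f g : (Fin n → Fin k) → ℝ) :
    expect p (fun ω => f ω + g ω) = expect p f + expect p g := by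
  simp only [expect, mul_add, sum_add_distrib]

lemma expect_const_mul (c : ℝ) (f : (Fin n → Fin k) → ℝ) :
    expect p (fun ω => c * f ω) = c * expect p f := by
  simp only [expect, mul_sum]
  exact sum_congr rfl fun ω _ => by ring

lemma expect_sum {ι : Type*} (s : Finset ι) (f : ι → (Fin n → Fin k) → ℝ) :
    expect p (fun ω => ∑ i ∈ s, f i ω) = ∑ i ∈ s, expect p (f i) := by
  simp only [expect, mul_sum]
  exact sum_comm

lemma expect_mono (hp : ∀ i, 0 ≤ p i) {f g : (Fin n → Fin k) → ℝ} (h : ∀ ω, f ω ≤ g ω) :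
    expect p f ≤ expect p g :=
  sum_le_sum fun ω _ => mul_le_mul_of_nonneg_left (h ω) (prod_nonneg fun _ _ => hp _)

lemma expect_const (hsum : ∑ i, p i = 1) (c : ℝ) :
    expect p (fun _ : Fin n → Fin k => c) = c := by
  rw [expect, ← sum_mul, ← Fintype.prod_sum (fun (_ : Fin n) => p)]
  simp [hsum]

lemma expect_insertNth (j : Fin (n + 1)) (f : (Fin (n + 1) → Fin k) → ℝ) :
    expect p f = ∑ a, p a * expect p (fun σ => f (j.insertNth a σ)) := by
  simp only [expect, mul_sum]
  rw [← (Fin.insertNthEquiv (fun _ => Fin k) j).sum_comp, Fintype.sum_prod_type]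
  refine sum_congr rfl fun a _ => sum_congr rfl fun σ _ => ?_
  simp only [Fin.insertNthEquiv_apply, Fin.prod_univ_succAbove _ j, Fin.insertNth_apply_same,
    Fin.insertNth_apply_succAbove]
  exact mul_assoc _ _ _

lemma expect_cons (f : (Fin (n + 1) → Fin k) → ℝ) :
    expect p f = ∑ a, p a * expect p (fun σ => f (Fin.cons a σ)) := by
  simpa only [Fin.insertNth_zero'] using expect_insertNth 0 f

end Expectation

section WeightedSums

variable {ι : Type*} [Fintype ι] {q : ι → ℝ}

lemma sum_mul_sub_sq (v : ι → ℝ) (c : ℝ) :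
    ∑ a, q a * (v a - c) ^ 2 = ∑ a, q a * v a ^ 2 - 2 * c * ∑ a, q a * v a + c ^ 2 * ∑ a, q a := by
  have h : ∀ a, q a * (v a - c) ^ 2 = q a * v a ^ 2 - 2 * c * (q a * v a) + c ^ 2 * q a :=
    fun a => by ring
  simp only [h, sum_add_distrib, sum_sub_distrib, ← mul_sum]

lemma sum_sum_mul_mul_sub_sq (v : ι → ℝ) :
    ∑ a, ∑ b, q a * q b * (v a - v b) ^ 2
      = 2 * ((∑ a, q a) * ∑ a, q a * v a ^ 2 - (∑ a, q a * v a) ^ 2) := by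
  have h : ∀ a b, q a * q b * (v a - v b) ^ 2
      = q a * v a ^ 2 * q b + q a * (q b * v b ^ 2) - 2 * (q a * v a) * (q b * v b) :=
    fun a b => by ring
  simp only [h, sum_add_distrib, sum_sub_distrib, ← mul_sum, ← sum_mul]
  ring

lemma sum_mul_sub_sq_eq_add (hq : ∑ a, q a = 1) (v : ι → ℝ) (c : ℝ) :
    ∑ a, q a * (v a - c) ^ 2
      = ∑ a, q a * (v a - ∑ b, q b * v b) ^ 2 + (∑ b, q b * v b - c) ^ 2 := by
  rw [sum_mul_sub_sq, sum_mul_sub_sq, hq]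
  ring

lemma sum_mul_sub_mean_sq (hq : ∑ a, q a = 1) (v : ι → ℝ) :
    ∑ a, q a * (v a - ∑ b, q b * v b) ^ 2 = 1 / 2 * ∑ a, ∑ b, q a * q b * (v a - v b) ^ 2 := by
  rw [sum_mul_sub_sq, sum_sum_mul_mul_sub_sq, hq]
  ring

lemma sum_sum_mul_mul_sub_sq_le (hq : ∑ a, q a = 1) (v : ι → ℝ) :
    ∑ a, ∑ b, q a * q b * (v a - v b) ^ 2 ≤ 2 * ∑ a, q a * v a ^ 2 := by
  rw [sum_sum_mul_mul_sub_sq, hq]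
  nlinarith [sq_nonneg (∑ a, q a * v a)]

lemma sq_sum_mul_le (hq0 : ∀ a, 0 ≤ q a) (hq : ∑ a, q a = 1) (v : ι → ℝ) :
    (∑ a, q a * v a) ^ 2 ≤ ∑ a, q a * v a ^ 2 := by
  have hsq : ∀ a, (q a * v a) ^ 2 = q a * (q a * v a ^ 2) := fun a => by ring
  simpa [hq] using sum_sq_le_sum_mul_sum_of_sq_le_mul univ (fun a _ => hq0 a)
    (fun a _ => mul_nonneg (hq0 a) (sq_nonneg (v a))) (fun a _ => (hsq a).le)

end WeightedSums

section EfronStein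

variable {k : ℕ} {p : Fin k → ℝ}

-- `E[f | X₁, …, Xₙ]`: the coordinate `0` is integrated out.
noncomputable def headMean (p : Fin k → ℝ) {n : ℕ} (f : (Fin (n + 1) → Fin k) → ℝ)
    (σ : Fin n → Fin k) : ℝ :=
  ∑ a, p a * f (Fin.cons a σ)

lemma expect_headMean {n : ℕ} (f : (Fin (n + 1) → Fin k) → ℝ) :
    expect p (headMean p f) = expect p f := by
  change expect p (fun σ => ∑ a, p a * f (Fin.cons a σ)) = _
  simp only [expect_sum, expect_const_mul]
  exact (expect_cons f).symm

lemma var_eq_expect_add_var_headMean (hsum : ∑ i, p i = 1) {n : ℕ}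
    (f : (Fin (n + 1) → Fin k) → ℝ) :
    var p f = expect p (fun σ => ∑ a, p a * (f (Fin.cons a σ) - headMean p f σ) ^ 2)
      + var p (headMean p f) := by
  rw [var, var, expect_headMean, ← expect_add, ← expect_headMean (fun ω => (f ω - expect p f) ^ 2)]
  congr 1
  funext σ
  exact sum_mul_sub_sq_eq_add hsum _ _

lemma expect_sum_sq_sub_headMean (hsum : ∑ i, p i = 1) {n : ℕ} (f : (Fin (n + 1) → Fin k) → ℝ) :
    expect p (fun σ => ∑ a, p a * (f (Fin.cons a σ) - headMean p f σ) ^ 2)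
      = 1 / 2 * expect p (fun ω => ∑ x, p x * (f ω - f (Function.update ω 0 x)) ^ 2) := by
  rw [expect_cons (fun ω => ∑ x, p x * (f ω - f (Function.update ω 0 x)) ^ 2)]
  simp only [Fin.update_cons_zero, ← expect_const_mul, ← expect_sum]
  congr 1
  funext σ
  rw [headMean, sum_mul_sub_mean_sq hsum]
  simp only [mul_sum, mul_assoc]

lemma sq_sub_headMean_le (hp : ∀ i, 0 ≤ p i) (hsum : ∑ i, p i = 1) {n : ℕ}
    (f : (Fin (n + 1) → Fin k) → ℝ) (σ τ : Fin n → Fin k) :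
    (headMean p f σ - headMean p f τ) ^ 2
      ≤ ∑ a, p a * (f (Fin.cons a σ) - f (Fin.cons a τ)) ^ 2 := by
  simpa only [headMean, ← sum_sub_distrib, ← mul_sub] using sq_sum_mul_le hp hsum _

lemma expect_sq_sub_update_headMean_le (hp : ∀ i, 0 ≤ p i) (hsum : ∑ i, p i = 1) {n : ℕ}
    (f : (Fin (n + 1) → Fin k) → ℝ) (j : Fin n) :
    expect p (fun σ => ∑ x, p x * (headMean p f σ - headMean p f (Function.update σ j x)) ^ 2)
      ≤ expect p (fun ω => ∑ x, p x * (f ω - f (Function.update ω j.succ x)) ^ 2) := by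
  calc _ ≤ expect p (fun σ => ∑ x, p x * ∑ a, p a
          * (f (Fin.cons a σ) - f (Fin.cons a (Function.update σ j x))) ^ 2) :=
        expect_mono hp fun σ => sum_le_sum fun x _ =>
          mul_le_mul_of_nonneg_left (sq_sub_headMean_le hp hsum f _ _) (hp x)
    _ = _ := by
      rw [expect_cons (fun ω => ∑ x, p x * (f ω - f (Function.update ω j.succ x)) ^ 2)]
      simp only [← Fin.cons_update, ← expect_const_mul, ← expect_sum]
      congr 1
      funext σ
      simp only [mul_sum]
      rw [sum_comm]
      exact sum_congr rfl fun _ _ => sum_congr rfl fun _ _ => mul_left_comm _ _ _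

theorem efron_stein (hp : ∀ i, 0 ≤ p i) (hsum : ∑ i, p i = 1) :
    ∀ {n : ℕ} (f : (Fin n → Fin k) → ℝ),
      var p f ≤ 1 / 2 * ∑ j, expect p (fun ω => ∑ x, p x * (f ω - f (Function.update ω j x)) ^ 2)
  | 0, f => by simp [var, expect]
  | n + 1, f => by
    rw [var_eq_expect_add_var_headMean hsum, expect_sum_sq_sub_headMean hsum, Fin.sum_univ_succ,
      mul_add]
    gcongr
    refine (efron_stein hp hsum (headMean p f)).trans ?_
    gcongr with j
    exact expect_sq_sub_update_headMean_le hp hsum f j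

end EfronStein

section LogBounds

lemma sq_log_le_four_mul {x : ℝ} (hx : 1 ≤ x) : log x ^ 2 ≤ 4 * x := by
  have hsqrt : log x ≤ 2 * √x := by
    have h := log_le_sub_one_of_pos (sqrt_pos.2 (by linarith : 0 < x))
    rw [log_sqrt (by linarith)] at h
    linarith
  calc log x ^ 2 ≤ (2 * √x) ^ 2 := pow_le_pow_left₀ (log_nonneg hx) hsqrt 2
    _ = 4 * x := by rw [mul_pow, sq_sqrt (by linarith)]; norm_num

lemma natCast_mul_log_succ_sub_log_nonneg (m : ℕ) : 0 ≤ (m : ℝ) * (log (m + 1) - log m) := by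
  rcases m.eq_zero_or_pos with rfl | hm
  · simp
  · have hm' : (0 : ℝ) < m := by exact_mod_cast hm
    exact mul_nonneg hm'.le (sub_nonneg.2 (log_le_log hm' (by linarith)))

lemma natCast_mul_log_succ_sub_log_le_one (m : ℕ) : (m : ℝ) * (log (m + 1) - log m) ≤ 1 := by
  rcases m.eq_zero_or_pos with rfl | hm
  · simp
  · have hm' : (0 : ℝ) < m := by exact_mod_cast hm
    have h := log_le_sub_one_of_pos (div_pos (by linarith : (0 : ℝ) < m + 1) hm')
    rw [log_div (by linarith) hm'.ne'] at h
    calc (m : ℝ) * (log (m + 1) - log m) ≤ m * ((m + 1) / m - 1) :=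
          mul_le_mul_of_nonneg_left h hm'.le
      _ = 1 := by field_simp; ring

lemma concaveOn_one_add_log_sq : ConcaveOn ℝ (Set.Ici 1) (fun u => (1 + log u) ^ 2) := by
  have hderiv : ∀ u : ℝ, u ≠ 0 → HasDerivAt (fun u => (1 + log u) ^ 2) (2 * (1 + log u) / u) u := by
    intro u hu
    exact (((hasDerivAt_log hu).const_add 1).fun_pow 2).congr_deriv (by norm_num [div_eq_mul_inv])
  refine AntitoneOn.concaveOn_of_deriv (convex_Ici 1) ?_ ?_ ?_
  · exact fun u hu => (hderiv u (by linarith [Set.mem_Ici.1 hu])).continuousAt.continuousWithinAt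
  · rw [interior_Ici]
    exact fun u (hu : 1 < u) =>
      (hderiv u (by linarith)).differentiableAt.differentiableWithinAt
  · rw [interior_Ici]
    intro u (hu : 1 < u) v (hv : 1 < v) huv
    rw [(hderiv u (by linarith)).deriv, (hderiv v (by linarith)).deriv,
      div_le_div_iff₀ (by linarith) (by linarith)]
    have h := log_le_sub_one_of_pos (div_pos (by linarith : 0 < v) (by linarith : 0 < u))
    rw [log_div (by linarith) (by linarith), div_sub_one (by linarith),
      le_div_iff₀ (by linarith)] at h
    nlinarith [log_nonneg hu.le]

end LogBounds

section EmpiricalDivergence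

variable {k : ℕ} {p : Fin k → ℝ}

def symbolCount {n : ℕ} (i : Fin k) (ω : Fin n → Fin k) : ℕ := #{j | ω j = i}

lemma symbolCount_insertNth {n : ℕ} (j : Fin (n + 1)) (a i : Fin k) (σ : Fin n → Fin k) :
    symbolCount i (j.insertNth a σ) = symbolCount i σ + if a = i then 1 else 0 := by
  simp only [symbolCount, card_filter, Fin.sum_univ_succAbove _ j, Fin.insertNth_apply_same,
    Fin.insertNth_apply_succAbove]
  exact add_comm _ _

lemma symbolCount_le {n : ℕ} (i : Fin k) (σ : Fin n → Fin k) : symbolCount i σ ≤ n :=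
  (card_filter_le _ _).trans_eq (card_fin n)

lemma expect_mul_div_symbolCount_succ_le_one (hp : ∀ i, 0 ≤ p i) (hsum : ∑ i, p i = 1) {n : ℕ}
    (i : Fin k) :
    expect p (fun σ : Fin n → Fin k => (n + 1) * p i / (symbolCount i σ + 1)) ≤ 1 := by
  -- Over `n + 1` samples, `∑ j, 𝟙[ω j = i] / count i ω ≤ 1`, and the `j`-th summand has
  -- expectation `pᵢ E[1 / (count + 1)]` over the other `n` samples.
  have hcoord : ∀ j : Fin (n + 1),
      expect p (fun ω => (if ω j = i then 1 else 0) / (symbolCount i ω : ℝ))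
        = expect p (fun σ : Fin n → Fin k => p i / (symbolCount i σ + 1)) := by
    intro j
    rw [expect_insertNth j, sum_eq_single i]
    · simp only [Fin.insertNth_apply_same, symbolCount_insertNth, if_pos, ← expect_const_mul]
      push_cast
      simp only [mul_one_div]
    · intro a _ ha
      simp [Fin.insertNth_apply_same, ha, expect]
    · simp
  calc _ = ∑ j : Fin (n + 1), expect p (fun σ : Fin n → Fin k => p i / (symbolCount i σ + 1)) := by
        rw [sum_const, card_univ, Fintype.card_fin, nsmul_eq_mul, ← expect_const_mul]
        push_cast
        simp only [mul_div_assoc]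
    _ = expect p (fun ω => ∑ j, (if ω j = i then 1 else 0) / (symbolCount i ω : ℝ)) := by
        rw [expect_sum]
        exact sum_congr rfl fun j _ => (hcoord j).symm
    _ ≤ expect p (fun _ => 1) := by
        refine expect_mono hp fun ω => ?_
        rw [← sum_div, symbolCount, natCast_card_filter]
        exact div_self_le_one _
    _ = 1 := expect_const hsum 1

-- The summand of `D(P̂ ‖ P)` for a symbol of probability `r` seen `m` times among `n` samples.
noncomputable def klTerm (n : ℕ) (r : ℝ) (m : ℕ) : ℝ := (m / n : ℝ) * log ((m / n : ℝ) / r)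

noncomputable def klIncrement (n : ℕ) (r : ℝ) (m : ℕ) : ℝ := klTerm n r (m + 1) - klTerm n r m

lemma klDiv_empDist {n : ℕ} (ω : Fin n → Fin k) :
    klDiv (empDist ω) p = ∑ i, klTerm n (p i) (symbolCount i ω) := rfl

lemma klDiv_empDist_insertNth {n : ℕ} (j : Fin (n + 1)) (a : Fin k) (σ : Fin n → Fin k) :
    klDiv (empDist (j.insertNth a σ)) p
      = ∑ i, klTerm (n + 1) (p i) (symbolCount i σ)
        + klIncrement (n + 1) (p a) (symbolCount a σ) := by
  have h : ∀ i, klTerm (n + 1) (p i) (symbolCount i (j.insertNth a σ))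
      = klTerm (n + 1) (p i) (symbolCount i σ)
        + if a = i then klIncrement (n + 1) (p i) (symbolCount i σ) else 0 := by
    intro i
    rw [symbolCount_insertNth]
    split_ifs <;> simp [klIncrement]
  rw [klDiv_empDist, sum_congr rfl fun i _ => h i, sum_add_distrib, sum_ite_eq]
  simp

lemma mul_klTerm {n : ℕ} (hn : n ≠ 0) {r : ℝ} (hr : 0 < r) (m : ℕ) :
    n * klTerm n r m = m * (log m - log n - log r) := by
  rcases m.eq_zero_or_pos with rfl | hm
  · simp [klTerm]
  · have hn' : (0 : ℝ) < n := by exact_mod_cast Nat.pos_of_ne_zero hn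
    have hm' : (0 : ℝ) < m := by exact_mod_cast hm
    rw [klTerm, log_div (by positivity) hr.ne', log_div hm'.ne' hn'.ne']
    field_simp

lemma sq_mul_klIncrement_le {r : ℝ} (hr : 0 < r) {n m : ℕ} (hm : m ≤ n) :
    ((n + 1) * klIncrement (n + 1) r m) ^ 2 ≤ 4 * ((n + 1) * r / (m + 1)) + (1 - log r) ^ 2 := by
  set c := (n + 1 : ℝ) * klIncrement (n + 1) r m
  have hc : c = log (m + 1) - log (n + 1) - log r + m * (log (m + 1) - log m) := by
    have h := mul_klTerm (Nat.succ_ne_zero n) hr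
    simp only [c, klIncrement, mul_sub]
    push_cast at h
    rw [h, h]
    push_cast
    ring
  have hmn : log (m + 1) ≤ log (n + 1) :=
    log_le_log (by positivity) (by exact_mod_cast Nat.succ_le_succ hm)
  have hlog : log ((n + 1) * r / (m + 1)) = log (n + 1) + log r - log (m + 1) := by
    rw [log_div (by positivity) (by positivity), log_mul (by positivity) hr.ne']
  have hY : 0 ≤ (n + 1) * r / (m + 1) := by positivity
  have hup := natCast_mul_log_succ_sub_log_le_one m
  have hlow := natCast_mul_log_succ_sub_log_nonneg m
  rcases le_or_gt 0 c with hc0 | hc0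
  · nlinarith
  · have h1 : -c ≤ log ((n + 1) * r / (m + 1)) := by linarith
    have h2 : 1 ≤ (n + 1) * r / (m + 1) := by
      by_contra! h
      linarith [log_nonpos hY h.le]
    nlinarith [sq_log_le_four_mul h2]

lemma sum_mul_one_sub_log_sq_le (hp : ∀ i, 0 < p i) (hsum : ∑ i, p i = 1) :
    ∑ i, p i * (1 - log (p i)) ^ 2 ≤ (1 + log k) ^ 2 := by
  have hjensen := concaveOn_one_add_log_sq.le_map_sum (t := univ) (w := p) (p := fun i => (p i)⁻¹)
    (fun i _ => (hp i).le) hsum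
    (fun i _ => (one_le_inv₀ (hp i)).2 (hsum ▸ single_le_sum (fun j _ => (hp j).le) (mem_univ i)))
  simpa [log_inv, ← sub_eq_add_neg, mul_inv_cancel₀ (hp _).ne'] using hjensen

lemma expect_sq_klIncrement_le (hp : ∀ i, 0 < p i) (hsum : ∑ i, p i = 1) {n : ℕ} (i : Fin k) :
    (n + 1) ^ 2 * expect p (fun σ : Fin n → Fin k =>
        klIncrement (n + 1) (p i) (symbolCount i σ) ^ 2) ≤ 4 + (1 - log (p i)) ^ 2 := by
  have hp0 : ∀ i, 0 ≤ p i := fun i => (hp i).le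
  rw [← expect_const_mul]
  calc _ ≤ expect p (fun σ : Fin n → Fin k =>
          4 * ((n + 1) * p i / (symbolCount i σ + 1)) + (1 - log (p i)) ^ 2) :=
        expect_mono hp0 fun σ => by
          rw [← mul_pow]
          exact sq_mul_klIncrement_le (hp i) (symbolCount_le i σ)
    _ ≤ 4 + (1 - log (p i)) ^ 2 := by
        rw [expect_add, expect_const_mul, expect_const hsum]
        linarith [expect_mul_div_symbolCount_succ_le_one hp0 hsum (n := n) i]

lemma expect_sq_sub_klDiv_update_le (hp : ∀ i, 0 < p i) (hsum : ∑ i, p i = 1) {n : ℕ}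
    (j : Fin n) :
    expect p (fun ω : Fin n → Fin k =>
        ∑ x, p x * (klDiv (empDist ω) p - klDiv (empDist (Function.update ω j x)) p) ^ 2)
      ≤ 2 * (4 + (1 + log k) ^ 2) / n ^ 2 := by
  obtain ⟨n, rfl⟩ := Nat.exists_eq_add_one_of_ne_zero j.pos.ne'
  have hp0 : ∀ i, 0 ≤ p i := fun i => (hp i).le
  set Δ : Fin k → (Fin n → Fin k) → ℝ := fun i σ => klIncrement (n + 1) (p i) (symbolCount i σ)
  rw [expect_insertNth j]
  simp only [Fin.update_insertNth, klDiv_empDist_insertNth, add_sub_add_left_eq_sub,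
    ← expect_const_mul, ← expect_sum]
  calc _ ≤ expect p (fun σ => 2 * ∑ a, p a * Δ a σ ^ 2) :=
        expect_mono hp0 fun σ => by
          simpa only [mul_sum, mul_assoc] using sum_sum_mul_mul_sub_sq_le hsum (fun a => Δ a σ)
    _ = 2 * ∑ a, p a * expect p (fun σ => Δ a σ ^ 2) := by
        rw [expect_const_mul, expect_sum]
        simp only [expect_const_mul]
    _ ≤ 2 * ∑ a, p a * ((4 + (1 - log (p a)) ^ 2) / (n + 1) ^ 2) := by
        gcongr with a
        · exact hp0 a
        · rw [le_div_iff₀' (by positivity)]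
          exact expect_sq_klIncrement_le hp hsum a
    _ = 2 * (∑ a, p a * (4 + (1 - log (p a)) ^ 2)) / (n + 1) ^ 2 := by
        rw [mul_div_assoc, sum_div]
        simp only [mul_div_assoc]
    _ ≤ 2 * (4 + (1 + log k) ^ 2) / ((n + 1 : ℕ) : ℝ) ^ 2 := by
        push_cast
        gcongr
        simp only [mul_add, sum_add_distrib, ← sum_mul, hsum]
        linarith [sum_mul_one_sub_log_sq_le hp hsum]

end EmpiricalDivergence

theorem kl_variance_le_log_sq_general (n k : ℕ)
    (p : Fin k → ℝ) (hpos : ∀ i, 0 < p i) (hsum : ∑ i, p i = 1) :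
    var p (fun ω : Fin n → Fin k => klDiv (empDist ω) p) ≤
      6 * (3 + Real.log k) ^ 2 / n := by
  calc _ ≤ 1 / 2 * ∑ j : Fin n, 2 * (4 + (1 + log k) ^ 2) / n ^ 2 := by
        refine (efron_stein (fun i => (hpos i).le) hsum _).trans ?_
        gcongr with j
        exact expect_sq_sub_klDiv_update_le hpos hsum j
    _ = (4 + (1 + log k) ^ 2) / n := by
        rcases eq_or_ne (n : ℝ) 0 with hn | hn
        · simp [hn]
        · simp only [sum_const, card_univ, Fintype.card_fin, nsmul_eq_mul]
          field_simp
    _ ≤ _ := by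
        gcongr
        nlinarith [log_natCast_nonneg k]

/-- Variance upper bound: `Var[D(P̂_{n,k}‖P)] ≤ 6(3 + log k)²/n`. -/
theorem kl_variance_le_log_sq (n k : ℕ) (hn : 1 ≤ n) (hk : 2 ≤ k)
    (p : Fin k → ℝ) (hpos : ∀ i, 0 < p i) (hsum : ∑ i, p i = 1) :
    var p (fun ω : Fin n → Fin k => klDiv (empDist ω) p) ≤
      6 * (3 + Real.log k) ^ 2 / n :=
  kl_variance_le_log_sq_general n k p hpos hsum
end

section
/- For every integer k ≥ 2, every probability vector P ∈ M_k with all p_i > 0, every integer n ≥ 1, and every subset F ⊆ M_k, one has P(P̂_{n,k} ∈ F) ≤ 2(k−1)·exp(−n·(inf_{P' ∈ F} D(P'‖P))/(k−1)). -/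
namespace EmpBound

open Finset

variable {n k : ℕ}

def cnt (B : Finset (Fin k)) (ω : Fin n → Fin k) : ℕ :=
  ∑ l : Fin n, if ω l ∈ B then 1 else 0

noncomputable def SS (g : Fin k → ℝ) (A : Finset (Fin k)) : ℝ := ∑ i ∈ A, g i

noncomputable def cT (q p : Fin k → ℝ) (A B : Finset (Fin k)) : ℝ :=
  SS q A * (Real.log (SS q A) - Real.log (SS q (A ∪ B)) - Real.log (SS p A)
      + Real.log (SS p (A ∪ B)))
  + SS q B * (Real.log (SS q B) - Real.log (SS q (A ∪ B)) - Real.log (SS p B)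
      + Real.log (SS p (A ∪ B)))

lemma cT_symm (q p : Fin k → ℝ) (A B : Finset (Fin k)) : cT q p A B = cT q p B A := by
  unfold cT; rw [Finset.union_comm B A]; ring

lemma cnt_le (B : Finset (Fin k)) (ω : Fin n → Fin k) : cnt B ω ≤ n := by
  unfold cnt
  calc ∑ l : Fin n, (if ω l ∈ B then 1 else 0)
      ≤ ∑ _l : Fin n, 1 := Finset.sum_le_sum (by intro i _; split <;> omega)
    _ = n := by simp

lemma cnt_union (B C : Finset (Fin k)) (h : Disjoint B C) (ω : Fin n → Fin k) :
    cnt (B ∪ C) ω = cnt B ω + cnt C ω := by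
  unfold cnt
  rw [← Finset.sum_add_distrib]
  refine Finset.sum_congr rfl (fun l _ => ?_)
  by_cases hB : ω l ∈ B
  · have hC : ω l ∉ C := Finset.disjoint_left.mp h hB
    simp [hB, hC]
  · by_cases hC : ω l ∈ C <;> simp [hB, hC]

lemma probOf_nonneg (p : Fin k → ℝ) (hp : ∀ i, 0 ≤ p i) (E : Set (Fin n → Fin k)) :
    0 ≤ probOf p E := by
  unfold probOf
  refine Finset.sum_nonneg (fun ω _ => ?_)
  split
  · exact Finset.prod_nonneg (fun _ _ => hp _)
  · exact le_refl 0

lemma probOf_mono (p : Fin k → ℝ) (hp : ∀ i, 0 ≤ p i) {E E' : Set (Fin n → Fin k)}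
    (h : E ⊆ E') : probOf p E ≤ probOf p E' := by
  classical
  unfold probOf
  refine Finset.sum_le_sum (fun ω _ => ?_)
  by_cases hE : ω ∈ E
  · rw [if_pos hE, if_pos (h hE)]
  · rw [if_neg hE]
    split
    · exact Finset.prod_nonneg (fun _ _ => hp _)
    · exact le_refl 0

lemma sum_prod_eq_pow (g : Fin k → ℝ) :
    ∑ ω : Fin n → Fin k, ∏ l, g (ω l) = (∑ i, g i) ^ n := by
  have h := Finset.prod_univ_sum (fun _ : Fin n => (Finset.univ : Finset (Fin k)))
    (fun _ i => g i)
  rw [Fintype.piFinset_univ] at h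
  rw [← h, Finset.prod_const, Finset.card_univ, Fintype.card_fin]

lemma probOf_le_one (p : Fin k → ℝ) (hp : ∀ i, 0 ≤ p i) (hsum : ∑ i, p i = 1)
    (E : Set (Fin n → Fin k)) : probOf p E ≤ 1 := by
  classical
  unfold probOf
  calc (∑ ω : Fin n → Fin k, if ω ∈ E then ∏ j, p (ω j) else 0)
      ≤ ∑ ω : Fin n → Fin k, ∏ j, p (ω j) := by
        refine Finset.sum_le_sum (fun ω _ => ?_)
        split
        · exact le_refl _
        · exact Finset.prod_nonneg (fun _ _ => hp _)
    _ = (∑ i, p i) ^ n := sum_prod_eq_pow p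
    _ = 1 := by rw [hsum, one_pow]

lemma probOf_union_le (p : Fin k → ℝ) (hp : ∀ i, 0 ≤ p i) (E E' : Set (Fin n → Fin k)) :
    probOf p (E ∪ E') ≤ probOf p E + probOf p E' := by
  classical
  unfold probOf
  rw [← Finset.sum_add_distrib]
  refine Finset.sum_le_sum (fun ω _ => ?_)
  have hnn : (0:ℝ) ≤ ∏ j, p (ω j) := Finset.prod_nonneg (fun _ _ => hp _)
  by_cases hE : ω ∈ E
  · rw [if_pos (Set.mem_union_left _ hE), if_pos hE]
    split
    · linarith
    · simp
  · by_cases hE' : ω ∈ E'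
    · rw [if_pos (Set.mem_union_right _ hE'), if_neg hE, if_pos hE']
      simp
    · rw [if_neg (by simp [hE, hE']), if_neg hE, if_neg hE']
      simp

lemma probOf_biUnion_le (p : Fin k → ℝ) (hp : ∀ i, 0 ≤ p i) (s : Finset ℕ)
    (Q : ℕ → Set (Fin n → Fin k)) :
    probOf p {ω | ∃ j ∈ s, ω ∈ Q j} ≤ ∑ j ∈ s, probOf p (Q j) := by
  classical
  unfold probOf
  rw [Finset.sum_comm]
  refine Finset.sum_le_sum (fun ω _ => ?_)
  have hnn : (0:ℝ) ≤ ∏ j, p (ω j) := Finset.prod_nonneg (fun _ _ => hp _)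
  by_cases hE : ω ∈ {ω | ∃ j ∈ s, ω ∈ Q j}
  · rw [if_pos hE]
    obtain ⟨j₀, hj₀, hmem⟩ := hE
    calc (∏ j, p (ω j)) = (if ω ∈ Q j₀ then ∏ j, p (ω j) else 0) := by rw [if_pos hmem]
      _ ≤ ∑ j ∈ s, (if ω ∈ Q j then ∏ l, p (ω l) else 0) := by
          refine Finset.single_le_sum (f := fun j => if ω ∈ Q j then ∏ l, p (ω l) else 0)
            (fun j _ => ?_) hj₀
          split
          · exact hnn
          · exact le_refl 0
  · rw [if_neg hE]
    refine Finset.sum_nonneg (fun j _ => ?_)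
    split
    · exact hnn
    · exact le_refl 0

/-- Slice sum: summing the product weight over samples with exactly `m` hits in `B`. -/
lemma slice_sum (g : Fin k → ℝ) (B : Finset (Fin k)) :
    ∀ (n m : ℕ), (∑ ω : Fin n → Fin k, if cnt B ω = m then ∏ l, g (ω l) else 0)
      = (n.choose m : ℝ) * (SS g Bᶜ) ^ (n - m) * (SS g B) ^ m := by
  intro n
  induction n with
  | zero =>
    intro m
    cases m with
    | zero => simp [cnt, SS]
    | succ m' => simp [cnt]
  | succ n ih =>
    intro m
    have hequiv : ∀ F : (Fin (n+1) → Fin k) → ℝ,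
        (∑ ω : Fin (n+1) → Fin k, F ω) = ∑ a : Fin k, ∑ ω : Fin n → Fin k, F (Fin.cons a ω) := by
      intro F
      rw [← Equiv.sum_comp (Fin.consEquiv (fun _ : Fin (n+1) => Fin k)) F,
        Fintype.sum_prod_type]
      exact Finset.sum_congr rfl (fun x _ => Finset.sum_congr rfl (fun y _ => rfl))
    rw [hequiv]
    have hcnt : ∀ (a : Fin k) (ω : Fin n → Fin k),
        cnt B (Fin.cons a ω) = (if a ∈ B then 1 else 0) + cnt B ω := by
      intro a ω
      unfold cnt
      rw [Fin.sum_univ_succ]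
      simp
    have hprod : ∀ (a : Fin k) (ω : Fin n → Fin k),
        (∏ l, g ((Fin.cons a ω : Fin (n+1) → Fin k) l)) = g a * ∏ l, g (ω l) := by
      intro a ω
      rw [Fin.prod_univ_succ]
      simp
    have hsplit : ∀ a : Fin k,
        (∑ ω : Fin n → Fin k, if cnt B (Fin.cons a ω) = m then ∏ l, g ((Fin.cons a ω : Fin (n+1) → Fin k) l) else 0)
        = g a * ∑ ω : Fin n → Fin k,
            (if (if a ∈ B then 1 else 0) + cnt B ω = m then ∏ l, g (ω l) else 0) := by
      intro a
      rw [Finset.mul_sum]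
      refine Finset.sum_congr rfl (fun ω _ => ?_)
      rw [hcnt, hprod, mul_ite, mul_zero]
    rw [Finset.sum_congr rfl (fun a _ => hsplit a)]
    rw [← Finset.sum_add_sum_compl B
      (fun a => g a * ∑ ω : Fin n → Fin k,
        (if (if a ∈ B then 1 else 0) + cnt B ω = m then ∏ l, g (ω l) else 0))]
    have hinB : ∀ a ∈ B,
        (g a * ∑ ω : Fin n → Fin k,
          (if (if a ∈ B then 1 else 0) + cnt B ω = m then ∏ l, g (ω l) else 0))
        = g a * ∑ ω : Fin n → Fin k, (if 1 + cnt B ω = m then ∏ l, g (ω l) else 0) := by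
      intro a ha
      rw [Finset.sum_congr rfl (fun ω _ => by rw [if_pos ha])]
    have hinBc : ∀ a ∈ Bᶜ,
        (g a * ∑ ω : Fin n → Fin k,
          (if (if a ∈ B then 1 else 0) + cnt B ω = m then ∏ l, g (ω l) else 0))
        = g a * ∑ ω : Fin n → Fin k, (if cnt B ω = m then ∏ l, g (ω l) else 0) := by
      intro a ha
      have ha' : a ∉ B := Finset.mem_compl.mp ha
      rw [Finset.sum_congr rfl (fun ω _ => by rw [if_neg ha', Nat.zero_add])]
    rw [Finset.sum_congr rfl hinB, Finset.sum_congr rfl hinBc]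
    rw [Finset.sum_congr rfl (fun a (_ : a ∈ Bᶜ) => by rw [ih m]), ← Finset.sum_mul,
      ← Finset.sum_mul]
    simp only [SS]
    cases m with
    | zero =>
      have h0 : (∑ ω : Fin n → Fin k, (if 1 + cnt B ω = 0 then ∏ l, g (ω l) else 0)) = 0 := by
        rw [Finset.sum_congr rfl (fun ω _ => by
          rw [if_neg (show ¬(1 + cnt B ω = 0) by omega)]), Finset.sum_const, smul_zero]
      rw [h0, mul_zero, zero_add]
      simp [pow_succ']
    | succ m' =>
      have hiff : ∀ c : ℕ, (1 + c = m' + 1) ↔ (c = m') := by intro c; omega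
      have hinner : (∑ ω : Fin n → Fin k,
          (if 1 + cnt B ω = m' + 1 then ∏ l, g (ω l) else 0))
          = (n.choose m' : ℝ) * SS g Bᶜ ^ (n - m') * SS g B ^ m' := by
        rw [Finset.sum_congr rfl (fun ω _ => by
          rw [if_congr (hiff (cnt B ω)) rfl rfl]), ih m']
      rw [hinner]
      simp only [SS]
      rcases lt_trichotomy m' n with hlt | heq | hgt
      · have he1 : n + 1 - (m' + 1) = n - m' := by omega
        have he2 : n - m' = (n - (m' + 1)) + 1 := by omega
        rw [Nat.choose_succ_succ n m', he1, he2]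
        push_cast
        ring
      · subst heq
        have hz : m'.choose (m' + 1) = 0 := Nat.choose_eq_zero_of_lt (by omega)
        rw [hz]
        simp [Nat.choose_self]
        ring
      · have hz1 : n.choose m' = 0 := Nat.choose_eq_zero_of_lt hgt
        have hz2 : n.choose (m' + 1) = 0 := Nat.choose_eq_zero_of_lt (by omega)
        have hz3 : (n + 1).choose (m' + 1) = 0 := Nat.choose_eq_zero_of_lt (by omega)
        rw [hz1, hz2, hz3]
        simp


lemma cnt_eq_sum_cards (A : Finset (Fin k)) (ω : Fin n → Fin k) :
    (∑ i ∈ A, (Finset.univ.filter (fun l => ω l = i)).card) = cnt A ω := by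
  unfold cnt
  rw [Finset.sum_congr rfl (fun i (_ : i ∈ A) => Finset.card_filter (fun l => ω l = i) _)]
  rw [Finset.sum_comm]
  refine Finset.sum_congr rfl (fun l _ => ?_)
  exact Finset.sum_ite_eq A (ω l) (fun _ => 1)

lemma empSS (hn : 0 < n) (ω : Fin n → Fin k) (A : Finset (Fin k)) :
    SS (empDist ω) A = (cnt A ω : ℝ) / n := by
  unfold SS empDist
  rw [← Finset.sum_div]
  congr 1
  rw [← cnt_eq_sum_cards, Nat.cast_sum]

lemma cnt_univ (ω : Fin n → Fin k) : cnt (Finset.univ : Finset (Fin k)) ω = n := by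
  unfold cnt; simp

lemma empSum (hn : 0 < n) (ω : Fin n → Fin k) : ∑ i, empDist ω i = 1 := by
  have h := empSS (k := k) hn ω Finset.univ
  unfold SS at h
  rw [h, cnt_univ]
  field_simp

lemma klDiv_nonneg (q p : Fin k → ℝ) (hq0 : ∀ i, 0 ≤ q i) (hp : ∀ i, 0 < p i)
    (hq1 : ∑ i, q i = 1) (hp1 : ∑ i, p i = 1) : 0 ≤ klDiv q p := by
  unfold klDiv
  have key : ∀ i, q i - p i ≤ q i * Real.log (q i / p i) := by
    intro i
    rcases eq_or_lt_of_le (hq0 i) with h0 | hpos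
    · rw [← h0, zero_sub, zero_mul]
      exact neg_nonpos.mpr (hp i).le
    · have hlog : Real.log (p i / q i) ≤ p i / q i - 1 :=
        Real.log_le_sub_one_of_pos (div_pos (hp i) hpos)
      have hneg : Real.log (q i / p i) = - Real.log (p i / q i) := by
        rw [← Real.log_inv]
        congr 1
        field_simp
      have h3 : q i * Real.log (p i / q i) ≤ p i - q i := by
        calc q i * Real.log (p i / q i) ≤ q i * (p i / q i - 1) :=
              mul_le_mul_of_nonneg_left hlog (hq0 i)
          _ = p i - q i := by field_simp
      rw [hneg, mul_neg]
      linarith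
  calc (0:ℝ) = (∑ i, q i) - (∑ i, p i) := by rw [hq1, hp1]; ring
    _ = ∑ i, (q i - p i) := by rw [Finset.sum_sub_distrib]
    _ ≤ ∑ i, q i * Real.log (q i / p i) := Finset.sum_le_sum (fun i _ => key i)

lemma exists_big (s : Finset ℕ) (hs : s.Nonempty) (f : ℕ → ℝ) (a : ℝ)
    (h : a ≤ ∑ j ∈ s, f j) : ∃ j ∈ s, a / s.card ≤ f j := by
  by_contra hc
  push_neg at hc
  have hlt := Finset.sum_lt_sum_of_nonempty hs hc
  rw [Finset.sum_const, nsmul_eq_mul] at hlt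
  have hcard : (0:ℝ) < (s.card : ℝ) := by
    exact_mod_cast Finset.card_pos.mpr hs
  have heq : (s.card : ℝ) * (a / s.card) = a := by field_simp
  linarith

lemma chain_rule (hk : 2 ≤ k) (q p : Fin k → ℝ) (hp : ∀ i, 0 < p i)
    (hq1 : ∑ i, q i = 1) (hp1 : ∑ i, p i = 1) :
    klDiv q p = ∑ j ∈ Finset.range (k-1),
      cT q p (Finset.univ.filter (fun i : Fin k => i.val = j))
             (Finset.univ.filter (fun i : Fin k => j < i.val)) := by
  classical
  set Cf : ℕ → Finset (Fin k) := fun j => Finset.univ.filter (fun i : Fin k => i.val = j)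
    with hCf
  set Tf : ℕ → Finset (Fin k) := fun j => Finset.univ.filter (fun i : Fin k => j ≤ i.val)
    with hTf
  set Df : ℕ → Finset (Fin k) := fun j => Finset.univ.filter (fun i : Fin k => j < i.val)
    with hDf
  set Gf : ℕ → ℝ := fun j => SS q (Tf j) * (Real.log (SS q (Tf j)) - Real.log (SS p (Tf j)))
    with hGf
  set ψ : ℕ → ℝ := fun j => SS q (Cf j) * (Real.log (SS q (Cf j)) - Real.log (SS p (Cf j)))
    with hψ
  have hDT : ∀ j : ℕ, Df j = Tf (j+1) := by
    intro j; ext i; simp [hDf, hTf]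
  have hUT : ∀ j : ℕ, Cf j ∪ Df j = Tf j := by
    intro j; ext i; simp [hCf, hDf, hTf]; omega
  have hdisj : ∀ j : ℕ, Disjoint (Cf j) (Df j) := by
    intro j
    rw [Finset.disjoint_left]
    intro i hi hi'
    simp [hCf, hDf] at hi hi'
    omega
  have hsplit : ∀ (g : Fin k → ℝ) (j : ℕ), SS g (Tf j) = SS g (Cf j) + SS g (Tf (j+1)) := by
    intro g j
    rw [← hDT, ← hUT]
    exact Finset.sum_union (hdisj j)
  have key : ∀ j : ℕ, cT q p (Cf j) (Df j) = ψ j + (Gf (j+1) - Gf j) := by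
    intro j
    simp only [hψ, hGf]
    unfold cT
    rw [hUT j, hDT j, hsplit q j, hsplit p j]
    ring
  rw [Finset.sum_congr rfl (fun j (_ : j ∈ Finset.range (k-1)) => key j),
    Finset.sum_add_distrib, Finset.sum_range_sub Gf (k-1)]
  have hG0 : Gf 0 = 0 := by
    have hT0 : Tf 0 = Finset.univ := by ext i; simp [hTf]
    rw [hGf]
    show SS q (Tf 0) * (Real.log (SS q (Tf 0)) - Real.log (SS p (Tf 0))) = 0
    have hq' : SS q (Tf 0) = 1 := by rw [hT0]; exact hq1
    have hp' : SS p (Tf 0) = 1 := by rw [hT0]; exact hp1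
    rw [hq', hp']
    simp
  have hGk : Gf (k-1) = ψ (k-1) := by
    have hTC : Tf (k-1) = Cf (k-1) := by
      ext i
      have := i.isLt
      simp [hTf, hCf]
      omega
    rw [hGf, hψ]
    show SS q (Tf (k-1)) * _ = SS q (Cf (k-1)) * _
    rw [hTC]
  rw [hG0, hGk, sub_zero]
  have hsum : (∑ j ∈ Finset.range (k-1), ψ j) + ψ (k-1) = ∑ j ∈ Finset.range k, ψ j := by
    have : k = (k-1) + 1 := by omega
    rw [this, Finset.sum_range_succ]
    congr 1 <;> omega
  rw [hsum]
  have hψi : ∀ i : Fin k, q i * Real.log (q i / p i) = ψ i.val := by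
    intro i
    have hCi : Cf i.val = {i} := by
      ext i'
      simp [hCf, Fin.ext_iff]
    rw [hψ]
    show _ = SS q (Cf i.val) * (Real.log (SS q (Cf i.val)) - Real.log (SS p (Cf i.val)))
    have hSq : SS q (Cf i.val) = q i := by rw [hCi]; exact Finset.sum_singleton _ _
    have hSp : SS p (Cf i.val) = p i := by rw [hCi]; exact Finset.sum_singleton _ _
    rw [hSq, hSp]
    by_cases hq : q i = 0
    · simp [hq]
    · rw [Real.log_div hq (hp i).ne']
  unfold klDiv
  rw [Finset.sum_congr rfl (fun i (_ : i ∈ Finset.univ) => hψi i)]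
  exact Fin.sum_univ_eq_sum_range ψ k

set_option maxHeartbeats 2000000 in
lemma cher (hn : 1 ≤ n) (p : Fin k → ℝ) (hpos : ∀ i, 0 < p i)
    (hsum : ∑ i, p i = 1) (C D : Finset (Fin k)) (hdis : Disjoint C D)
    (hC : C.Nonempty) (hD : D.Nonempty) (t : ℝ) (ht : 0 < t) :
    probOf p {ω : Fin n → Fin k |
        t ≤ cT (empDist ω) p C D ∧
        (cnt D ω : ℝ) * SS p C ≤ (cnt C ω : ℝ) * SS p D} ≤ Real.exp (-(n:ℝ) * t) := by
  classical
  have hnn : 0 < n := hn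
  have hn0 : (0:ℝ) < (n:ℝ) := by exact_mod_cast hn
  set E : Set (Fin n → Fin k) := {ω | t ≤ cT (empDist ω) p C D ∧
      (cnt D ω : ℝ) * SS p C ≤ (cnt C ω : ℝ) * SS p D} with hEdef
  have hπ1 : (0:ℝ) < SS p C := Finset.sum_pos (fun i _ => hpos i) hC
  have hπ2 : (0:ℝ) < SS p D := Finset.sum_pos (fun i _ => hpos i) hD
  have hPPpos : (0:ℝ) < SS p C + SS p D := by linarith
  have hUeq : SS p (C ∪ D) = SS p C + SS p D := Finset.sum_union hdis
  have hH0 : (0:ℝ) ≤ SS p (C ∪ D)ᶜ := Finset.sum_nonneg (fun i _ => (hpos i).le)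
  have hH1 : SS p C + SS p D + SS p (C ∪ D)ᶜ = 1 := by
    rw [← hUeq]
    exact Finset.sum_add_sum_compl (C ∪ D) p |>.trans hsum
  -- decompose by the count in C ∪ D
  have hdec : probOf p E = ∑ m ∈ Finset.range (n+1), ∑ ω : Fin n → Fin k,
      (if (ω ∈ E ∧ cnt (C ∪ D) ω = m) then ∏ l, p (ω l) else 0) := by
    unfold probOf
    rw [Finset.sum_comm]
    refine Finset.sum_congr rfl (fun ω _ => ?_)
    by_cases hEω : ω ∈ E
    · rw [if_pos hEω,
        Finset.sum_congr rfl (fun m (_ : m ∈ Finset.range (n+1)) =>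
          if_congr (and_iff_right hEω) rfl rfl),
        Finset.sum_ite_eq (Finset.range (n+1)) (cnt (C ∪ D) ω) (fun _ => ∏ l, p (ω l)),
        if_pos (Finset.mem_range.mpr (Nat.lt_succ_of_le (cnt_le _ _)))]
    · rw [if_neg hEω]
      symm
      exact Finset.sum_eq_zero (fun m _ => if_neg (fun hcon => hEω hcon.1))
  -- the per-slice bound
  have hm : ∀ m ∈ Finset.range (n+1), (∑ ω : Fin n → Fin k,
      (if (ω ∈ E ∧ cnt (C ∪ D) ω = m) then ∏ l, p (ω l) else 0))
      ≤ Real.exp (-(n:ℝ)*t) * ((n.choose m : ℝ) * (SS p (C ∪ D)ᶜ) ^ (n-m)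
          * (SS p C + SS p D) ^ m) := by
    intro m _
    by_cases hne : ∃ ω₁ : Fin n → Fin k, (ω₁ ∈ E ∧ cnt (C ∪ D) ω₁ = m)
    · obtain ⟨ω₁, hω₁⟩ := hne
      have hPex : ∃ c : ℕ, ∃ ω : Fin n → Fin k,
          (ω ∈ E ∧ cnt (C ∪ D) ω = m) ∧ cnt C ω = c :=
        ⟨cnt C ω₁, ω₁, hω₁, rfl⟩
      obtain ⟨cstar, hcspec, hcmin⟩ :
          ∃ c : ℕ, (∃ ω : Fin n → Fin k, (ω ∈ E ∧ cnt (C ∪ D) ω = m) ∧ cnt C ω = c) ∧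
            (∀ c' : ℕ, (∃ ω : Fin n → Fin k, (ω ∈ E ∧ cnt (C ∪ D) ω = m) ∧ cnt C ω = c')
              → c ≤ c') := by
        classical
        exact ⟨Nat.find hPex, Nat.find_spec hPex, fun c' hc' => Nat.find_min' hPex hc'⟩
      obtain ⟨ω₀, ⟨hω₀E, hω₀m⟩, hω₀c⟩ := hcspec
      have hmin : ∀ ω : Fin n → Fin k, ω ∈ E → cnt (C ∪ D) ω = m → cstar ≤ cnt C ω :=
        fun ω h1 h2 => hcmin _ ⟨ω, ⟨h1, h2⟩, rfl⟩
      have hEt : t ≤ cT (empDist ω₀) p C D := hω₀E.1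
      have hside : (cnt D ω₀ : ℝ) * SS p C ≤ (cnt C ω₀ : ℝ) * SS p D := hω₀E.2
      have hsum0 : cnt C ω₀ + cnt D ω₀ = m := by
        rw [← cnt_union C D hdis]; exact hω₀m
      have hle : cstar ≤ m := by omega
      have hD₀ : cnt D ω₀ = m - cstar := by omega
      have hm1 : 1 ≤ m := by
        by_contra h0
        have hmz : m = 0 := by omega
        have hcz : cnt C ω₀ = 0 := by omega
        have hdz : cnt D ω₀ = 0 := by omega
        have hbz : cnt (C ∪ D) ω₀ = 0 := by omega
        have e1 : SS (empDist ω₀) C = 0 := by rw [empSS hnn, hcz]; simp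
        have e2 : SS (empDist ω₀) D = 0 := by rw [empSS hnn, hdz]; simp
        have : cT (empDist ω₀) p C D = 0 := by unfold cT; rw [e1, e2]; ring
        rw [this] at hEt
        linarith
      have hmpos : (0:ℝ) < (m:ℝ) := by exact_mod_cast hm1
      -- cstar ≥ 1
      have hc1 : 1 ≤ cstar := by
        by_contra h0
        have hcz : cstar = 0 := by omega
        rw [hω₀c, hcz] at hside
        rw [hD₀, hcz] at hside
        simp at hside
        have hmr : (0:ℝ) < ((m - 0 : ℕ):ℝ) * SS p C := by
          apply mul_pos _ hπ1
          have : (1:ℕ) ≤ m - 0 := by omega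
          exact_mod_cast this
        -- hside : ((m - 0:ℕ):ℝ) * SS p C ≤ 0
        nlinarith [hside, hmr]
      have hcpos : (0:ℝ) < (cstar:ℝ) := by exact_mod_cast hc1
      have hcastsub : ((m - cstar : ℕ):ℝ) = (m:ℝ) - (cstar:ℝ) := by
        exact Nat.cast_sub hle
      -- the tilts
      obtain ⟨r, hrdef⟩ : ∃ x : ℝ, x = ((cstar:ℝ) * (SS p C + SS p D)) / ((m:ℝ) * SS p C) :=
        ⟨_, rfl⟩
      obtain ⟨r', hr'def⟩ : ∃ x : ℝ,
          x = (((m - cstar : ℕ):ℝ) * (SS p C + SS p D)) / ((m:ℝ) * SS p D) := ⟨_, rfl⟩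
      have hkey : ((m - cstar : ℕ):ℝ) * SS p C ≤ (cstar:ℝ) * SS p D := by
        rw [hcastsub]
        have h1 : (cnt D ω₀ : ℝ) = (m:ℝ) - (cstar:ℝ) := by rw [hD₀]; exact hcastsub
        have h2 : (cnt C ω₀ : ℝ) = (cstar:ℝ) := by exact_mod_cast hω₀c
        rw [h1, h2] at hside
        exact hside
      have hr1 : 1 ≤ r := by
        rw [hrdef, le_div_iff₀ (mul_pos hmpos hπ1), one_mul]
        rw [hcastsub] at hkey
        nlinarith [hkey]
      have hr0 : (0:ℝ) < r := lt_of_lt_of_le one_pos hr1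
      have hr'0 : (0:ℝ) ≤ r' := by
        rw [hr'def]
        apply div_nonneg _ (mul_pos hmpos hπ2).le
        apply mul_nonneg _ hPPpos.le
        positivity
      have hr'1 : r' ≤ 1 := by
        rw [hr'def, div_le_one (mul_pos hmpos hπ2)]
        rw [hcastsub] at hkey ⊢
        nlinarith [hkey]
      -- the tilted weights
      obtain ⟨p', hp'def⟩ : ∃ f : Fin k → ℝ,
          f = fun i => if i ∈ C then p i * r else if i ∈ D then p i * r' else p i := ⟨_, rfl⟩
      have hp'0 : ∀ i, 0 ≤ p' i := by
        intro i
        rw [hp'def]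
        dsimp only
        split
        · exact mul_nonneg (hpos i).le hr0.le
        · split
          · exact mul_nonneg (hpos i).le hr'0
          · exact (hpos i).le
      have hSc : SS p' (C ∪ D)ᶜ = SS p (C ∪ D)ᶜ := by
        refine Finset.sum_congr rfl (fun i hi => ?_)
        have hiB : i ∉ C ∪ D := Finset.mem_compl.mp hi
        have hiC : i ∉ C := fun h => hiB (Finset.mem_union_left _ h)
        have hiD : i ∉ D := fun h => hiB (Finset.mem_union_right _ h)
        rw [hp'def]
        dsimp only
        rw [if_neg hiC, if_neg hiD]
      have hSB : SS p' (C ∪ D) = SS p C + SS p D := by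
        have h1 : SS p' (C ∪ D) = SS p' C + SS p' D := Finset.sum_union hdis
        have h2 : SS p' C = SS p C * r := by
          unfold SS
          rw [Finset.sum_mul]
          refine Finset.sum_congr rfl (fun i hi => ?_)
          rw [hp'def]; dsimp only; rw [if_pos hi]
        have h3 : SS p' D = SS p D * r' := by
          unfold SS
          rw [Finset.sum_mul]
          refine Finset.sum_congr rfl (fun i hi => ?_)
          have hiC : i ∉ C := Finset.disjoint_right.mp hdis hi
          rw [hp'def]; dsimp only; rw [if_neg hiC, if_pos hi]
        rw [h1, h2, h3, hrdef, hr'def, hcastsub]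
        field_simp
        ring
      -- product formula
      have hprod : ∀ ω : Fin n → Fin k,
          (∏ l, p' (ω l)) = (∏ l, p (ω l)) * (r ^ (cnt C ω) * r' ^ (cnt D ω)) := by
        intro ω
        have h1 : ∀ l : Fin n, p' (ω l)
            = p (ω l) * (r ^ (if ω l ∈ C then 1 else 0) * r' ^ (if ω l ∈ D then 1 else 0)) := by
          intro l
          rw [hp'def]
          dsimp only
          by_cases hc : ω l ∈ C
          · have hd : ω l ∉ D := Finset.disjoint_left.mp hdis hc
            rw [if_pos hc, if_pos hc, if_neg hd, pow_one, pow_zero, mul_one]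
          · rw [if_neg hc, if_neg hc, pow_zero]
            by_cases hd : ω l ∈ D
            · rw [if_pos hd, if_pos hd, pow_one, one_mul]
            · rw [if_neg hd, if_neg hd, pow_zero, one_mul, mul_one]
        rw [Finset.prod_congr rfl (fun l _ => h1 l), Finset.prod_mul_distrib,
          Finset.prod_mul_distrib, Finset.prod_pow_eq_pow_sum, Finset.prod_pow_eq_pow_sum]
        rfl
      -- the core exponential bound
      have hqC : SS (empDist ω₀) C = (cstar:ℝ)/(n:ℝ) := by
        rw [empSS hnn, hω₀c]
      have hqD : SS (empDist ω₀) D = ((m - cstar : ℕ):ℝ)/(n:ℝ) := by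
        rw [empSS hnn, hD₀]
      have hqB : SS (empDist ω₀) (C ∪ D) = (m:ℝ)/(n:ℝ) := by
        rw [empSS hnn, hω₀m]
      have hstep2 : Real.exp ((n:ℝ)*t) ≤ r ^ cstar * r' ^ (m - cstar) := by
        rcases eq_or_lt_of_le hle with hcm | hclt
        · -- cstar = m
          have hD0' : m - cstar = 0 := by omega
          have hval : cT (empDist ω₀) p C D
              = (m:ℝ)/(n:ℝ) * (Real.log (SS p C + SS p D) - Real.log (SS p C)) := by
            unfold cT
            rw [hUeq, hqC, hqD, hqB, hD0', hcm]
            push_cast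
            ring
          have hnt : (n:ℝ)*t ≤ (m:ℝ) * (Real.log (SS p C + SS p D) - Real.log (SS p C)) := by
            have := mul_le_mul_of_nonneg_left hEt hn0.le
            rw [hval] at this
            calc (n:ℝ)*t ≤ (n:ℝ) * ((m:ℝ)/(n:ℝ) * (Real.log (SS p C + SS p D)
                - Real.log (SS p C))) := this
              _ = (m:ℝ) * (Real.log (SS p C + SS p D) - Real.log (SS p C)) := by
                  field_simp
          have hr_eq : r = (SS p C + SS p D)/(SS p C) := by
            rw [hrdef, ← hcm]
            rw [mul_div_mul_left _ _ (ne_of_gt hcpos)]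
          calc Real.exp ((n:ℝ)*t)
              ≤ Real.exp ((m:ℝ) * (Real.log (SS p C + SS p D) - Real.log (SS p C))) :=
                Real.exp_le_exp.mpr hnt
            _ = ((SS p C + SS p D)/(SS p C)) ^ m := by
                rw [← Real.log_div (ne_of_gt hPPpos) (ne_of_gt hπ1), Real.exp_nat_mul,
                  Real.exp_log (div_pos hPPpos hπ1)]
            _ = r ^ cstar * r' ^ (m - cstar) := by
                rw [hD0', pow_zero, mul_one, hr_eq, hcm]
        · -- cstar < m
          have hmc1 : 1 ≤ m - cstar := by omega
          have hmcpos : (0:ℝ) < ((m - cstar : ℕ):ℝ) := by exact_mod_cast hmc1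
          have hr'pos : (0:ℝ) < r' := by
            rw [hr'def]
            exact div_pos (mul_pos hmcpos hPPpos) (mul_pos hmpos hπ2)
          have hlogr : Real.log r
              = Real.log (cstar:ℝ) + Real.log (SS p C + SS p D)
                - (Real.log (m:ℝ) + Real.log (SS p C)) := by
            rw [hrdef, Real.log_div (by positivity) (by positivity),
              Real.log_mul (ne_of_gt hcpos) (ne_of_gt hPPpos),
              Real.log_mul (ne_of_gt hmpos) (ne_of_gt hπ1)]
          have hlogr' : Real.log r'
              = Real.log ((m - cstar : ℕ):ℝ) + Real.log (SS p C + SS p D)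
                - (Real.log (m:ℝ) + Real.log (SS p D)) := by
            rw [hr'def, Real.log_div (by positivity) (by positivity),
              Real.log_mul (ne_of_gt hmcpos) (ne_of_gt hPPpos),
              Real.log_mul (ne_of_gt hmpos) (ne_of_gt hπ2)]
          have hval : (n:ℝ) * cT (empDist ω₀) p C D
              = (cstar:ℝ) * Real.log r + ((m - cstar : ℕ):ℝ) * Real.log r' := by
            unfold cT
            rw [hUeq, hqC, hqD, hqB, hlogr, hlogr',
              Real.log_div (ne_of_gt hcpos) (ne_of_gt hn0),
              Real.log_div (ne_of_gt hmcpos) (ne_of_gt hn0),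
              Real.log_div (ne_of_gt hmpos) (ne_of_gt hn0)]
            have hcan : ∀ a X : ℝ, (n:ℝ) * (a/(n:ℝ) * X) = a * X := by
              intro a X
              field_simp
            rw [mul_add, hcan, hcan]
            ring
          calc Real.exp ((n:ℝ)*t)
              ≤ Real.exp ((n:ℝ) * cT (empDist ω₀) p C D) :=
                Real.exp_le_exp.mpr (mul_le_mul_of_nonneg_left hEt hn0.le)
            _ = Real.exp ((cstar:ℝ) * Real.log r) * Real.exp (((m - cstar : ℕ):ℝ) * Real.log r') := by
                rw [hval, Real.exp_add]
            _ = r ^ cstar * r' ^ (m - cstar) := by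
                rw [Real.exp_nat_mul, Real.exp_nat_mul, Real.exp_log hr0, Real.exp_log hr'pos]
      have hcore : ∀ ω : Fin n → Fin k, ω ∈ E → cnt (C ∪ D) ω = m →
          Real.exp ((n:ℝ)*t) ≤ r ^ (cnt C ω) * r' ^ (cnt D ω) := by
        intro ω hωE hωm
        have hsum1 : cnt C ω + cnt D ω = m := by rw [← cnt_union C D hdis]; exact hωm
        have hge : cstar ≤ cnt C ω := hmin ω hωE hωm
        have hstep1 : r ^ cstar * r' ^ (m - cstar) ≤ r ^ (cnt C ω) * r' ^ (cnt D ω) := by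
          have hsplit1 : r ^ (cnt C ω) = r ^ cstar * r ^ (cnt C ω - cstar) := by
            rw [← pow_add]
            congr 1
            omega
          have hsplit2 : r' ^ (m - cstar) = r' ^ (cnt C ω - cstar) * r' ^ (cnt D ω) := by
            rw [← pow_add]
            congr 1
            omega
          have hmono : r' ^ (cnt C ω - cstar) ≤ r ^ (cnt C ω - cstar) :=
            pow_le_pow_left₀ hr'0 (le_trans hr'1 hr1) _
          calc r ^ cstar * r' ^ (m - cstar)
              = r ^ cstar * (r' ^ (cnt C ω - cstar) * r' ^ (cnt D ω)) := by rw [hsplit2]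
            _ ≤ r ^ cstar * (r ^ (cnt C ω - cstar) * r' ^ (cnt D ω)) := by
                apply mul_le_mul_of_nonneg_left _ (pow_nonneg hr0.le _)
                exact mul_le_mul_of_nonneg_right hmono (pow_nonneg hr'0 _)
            _ = r ^ (cnt C ω) * r' ^ (cnt D ω) := by rw [hsplit1]; ring
        exact le_trans hstep2 hstep1
      -- assemble per-slice
      calc (∑ ω : Fin n → Fin k, (if (ω ∈ E ∧ cnt (C ∪ D) ω = m) then ∏ l, p (ω l) else 0))
          ≤ ∑ ω : Fin n → Fin k, (if cnt (C ∪ D) ω = m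
              then Real.exp (-(n:ℝ)*t) * ∏ l, p' (ω l) else 0) := by
            refine Finset.sum_le_sum (fun ω _ => ?_)
            by_cases hcond : ω ∈ E ∧ cnt (C ∪ D) ω = m
            · rw [if_pos hcond, if_pos hcond.2]
              have h1 : Real.exp ((n:ℝ)*t) * (∏ l, p (ω l)) ≤ ∏ l, p' (ω l) := by
                rw [hprod ω]
                have hmul : (Real.exp ((n:ℝ)*t)) * (∏ l, p (ω l))
                    ≤ (r ^ (cnt C ω) * r' ^ (cnt D ω)) * (∏ l, p (ω l)) :=
                  mul_le_mul_of_nonneg_right (hcore ω hcond.1 hcond.2)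
                    (Finset.prod_nonneg (fun l _ => (hpos (ω l)).le))
                linarith [hmul]
              have h2 := mul_le_mul_of_nonneg_left h1 (Real.exp_nonneg (-(n:ℝ)*t))
              have h3 : Real.exp (-(n:ℝ)*t) * (Real.exp ((n:ℝ)*t) * ∏ l, p (ω l))
                  = ∏ l, p (ω l) := by
                rw [← mul_assoc, ← Real.exp_add]
                norm_num
              rw [h3] at h2
              exact h2
            · rw [if_neg hcond]
              split
              · exact mul_nonneg (Real.exp_nonneg _)
                  (Finset.prod_nonneg (fun l _ => hp'0 (ω l)))
              · exact le_refl 0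
        _ = Real.exp (-(n:ℝ)*t) * ∑ ω : Fin n → Fin k,
              (if cnt (C ∪ D) ω = m then ∏ l, p' (ω l) else 0) := by
            rw [Finset.mul_sum]
            refine Finset.sum_congr rfl (fun ω _ => ?_)
            rw [mul_ite, mul_zero]
        _ = Real.exp (-(n:ℝ)*t) * ((n.choose m : ℝ) * (SS p (C ∪ D)ᶜ) ^ (n-m)
              * (SS p C + SS p D) ^ m) := by
            rw [slice_sum p' (C ∪ D) n m, hSc, hSB]
    · push_neg at hne
      have hz : (∑ ω : Fin n → Fin k,
          (if (ω ∈ E ∧ cnt (C ∪ D) ω = m) then ∏ l, p (ω l) else 0)) = 0 :=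
        Finset.sum_eq_zero (fun ω _ => if_neg (fun hcon => (hne ω hcon.1) hcon.2))
      rw [hz]
      apply mul_nonneg (Real.exp_nonneg _)
      apply mul_nonneg (mul_nonneg (by positivity) (pow_nonneg hH0 _)) (pow_nonneg hPPpos.le _)
  -- sum up
  calc probOf p E ≤ ∑ m ∈ Finset.range (n+1), Real.exp (-(n:ℝ)*t)
        * ((n.choose m : ℝ) * (SS p (C ∪ D)ᶜ) ^ (n-m) * (SS p C + SS p D) ^ m) := by
        rw [hdec]
        exact Finset.sum_le_sum hm
    _ = Real.exp (-(n:ℝ)*t) * ((SS p C + SS p D) + SS p (C ∪ D)ᶜ) ^ n := by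
        rw [← Finset.mul_sum, add_pow]
        congr 1
        exact Finset.sum_congr rfl (fun m _ => by ring)
    _ = Real.exp (-(n:ℝ)*t) := by
        rw [show (SS p C + SS p D) + SS p (C ∪ D)ᶜ = 1 from hH1, one_pow, mul_one]

end EmpBound

/-- Lemma 9: for any subset `F` of the simplex `M_k`,
`P(P̂_{n,k} ∈ F) ≤ 2(k−1)·exp(−n·inf_{P' ∈ F} D(P'‖P)/(k−1))`.
(When `F = ∅` the left-hand side is `0`, so the inequality holds for any
convention on the infimum of the empty set.) -/
theorem empirical_in_set_bound (n k : ℕ) (hn : 1 ≤ n) (hk : 2 ≤ k)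
    (p : Fin k → ℝ) (hpos : ∀ i, 0 < p i) (hsum : ∑ i, p i = 1)
    (F : Set (Fin k → ℝ))
    (hF : ∀ q ∈ F, (∀ i, 0 ≤ q i) ∧ ∑ i, q i = 1) :
    probOf p {ω : Fin n → Fin k | empDist ω ∈ F} ≤
      2 * ((k : ℝ) - 1) *
        Real.exp (-(n : ℝ) * sInf ((fun q => klDiv q p) '' F) / ((k : ℝ) - 1)) := by
  classical
  set s : ℝ := sInf ((fun q => klDiv q p) '' F) with hsdef
  have hp0 : ∀ i, 0 ≤ p i := fun i => (hpos i).le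
  have hk1 : (0:ℝ) < (k:ℝ) - 1 := by
    have h2 : (2:ℝ) ≤ (k:ℝ) := by exact_mod_cast hk
    linarith
  have hkcast : ((k - 1 : ℕ) : ℝ) = (k:ℝ) - 1 := by
    have : (1:ℕ) ≤ k := by omega
    push_cast [Nat.cast_sub this]
    ring
  rcases le_or_gt s 0 with hs0 | hspos
  · -- trivial branch
    have h1 : probOf p {ω : Fin n → Fin k | empDist ω ∈ F} ≤ 1 :=
      EmpBound.probOf_le_one p hp0 hsum _
    have h2 : (1:ℝ) ≤ Real.exp (-(n:ℝ) * s / ((k:ℝ)-1)) := by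
      apply Real.one_le_exp
      apply div_nonneg _ hk1.le
      have : (0:ℝ) ≤ (n:ℝ) := by positivity
      nlinarith
    have hk2 : (2:ℝ) ≤ (k:ℝ) := by exact_mod_cast hk
    have h3 : (2:ℝ) ≤ 2*((k:ℝ)-1) := by linarith
    nlinarith [h1, h2, h3, hk2, Real.exp_pos (-(n:ℝ) * s / ((k:ℝ)-1))]
  · -- main branch
    have hnn : 0 < n := hn
    obtain ⟨t, htdef⟩ : ∃ x : ℝ, x = s / ((k:ℝ)-1) := ⟨_, rfl⟩
    have ht : 0 < t := htdef ▸ div_pos hspos hk1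
    have hsub1 : {ω : Fin n → Fin k | empDist ω ∈ F} ⊆
        {ω : Fin n → Fin k | s ≤ klDiv (empDist ω) p} := by
      intro ω hω
      have hbdd : BddBelow ((fun q => klDiv q p) '' F) := by
        refine ⟨0, ?_⟩
        rintro x ⟨q, hq, rfl⟩
        exact EmpBound.klDiv_nonneg q p (hF q hq).1 hpos (hF q hq).2 hsum
      exact csInf_le hbdd ⟨empDist ω, hω, rfl⟩
    have hsub2 : {ω : Fin n → Fin k | s ≤ klDiv (empDist ω) p} ⊆
        {ω : Fin n → Fin k | ∃ j ∈ Finset.range (k-1),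
          ω ∈ {ω' : Fin n → Fin k | t ≤ EmpBound.cT (empDist ω') p
            (Finset.univ.filter (fun i : Fin k => i.val = j))
            (Finset.univ.filter (fun i : Fin k => j < i.val))}} := by
      intro ω hω
      have hchain := EmpBound.chain_rule hk (empDist ω) p hpos
        (EmpBound.empSum hnn ω) hsum
      have hge : s ≤ ∑ j ∈ Finset.range (k-1),
          EmpBound.cT (empDist ω) p (Finset.univ.filter (fun i : Fin k => i.val = j))
            (Finset.univ.filter (fun i : Fin k => j < i.val)) := by
        rw [← hchain]; exact hω
      have hrne : (Finset.range (k-1)).Nonempty := by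
        refine ⟨0, Finset.mem_range.mpr ?_⟩
        omega
      obtain ⟨j, hjmem, hjge⟩ := EmpBound.exists_big (Finset.range (k-1)) hrne _ s hge
      refine ⟨j, hjmem, ?_⟩
      have hcard : ((Finset.range (k-1)).card : ℝ) = (k:ℝ) - 1 := by
        rw [Finset.card_range, hkcast]
      rw [Set.mem_setOf_eq, htdef]
      rw [hcard] at hjge
      exact hjge
    calc probOf p {ω : Fin n → Fin k | empDist ω ∈ F}
        ≤ probOf p {ω : Fin n → Fin k | ∃ j ∈ Finset.range (k-1),
            ω ∈ {ω' : Fin n → Fin k | t ≤ EmpBound.cT (empDist ω') p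
              (Finset.univ.filter (fun i : Fin k => i.val = j))
              (Finset.univ.filter (fun i : Fin k => j < i.val))}} :=
          EmpBound.probOf_mono p hp0 (hsub1.trans hsub2)
      _ ≤ ∑ j ∈ Finset.range (k-1), probOf p {ω' : Fin n → Fin k | t ≤ EmpBound.cT (empDist ω') p
              (Finset.univ.filter (fun i : Fin k => i.val = j))
              (Finset.univ.filter (fun i : Fin k => j < i.val))} :=
          EmpBound.probOf_biUnion_le p hp0 _ _
      _ ≤ ∑ j ∈ Finset.range (k-1), 2 * Real.exp (-(n:ℝ) * t) := by
          refine Finset.sum_le_sum (fun j hj => ?_)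
          have hjk : j < k - 1 := Finset.mem_range.mp hj
          set Cf : Finset (Fin k) := Finset.univ.filter (fun i : Fin k => i.val = j) with hCf
          set Df : Finset (Fin k) := Finset.univ.filter (fun i : Fin k => j < i.val) with hDf
          have hCne : Cf.Nonempty := by
            refine ⟨⟨j, by omega⟩, ?_⟩
            rw [hCf]
            simp
          have hDne : Df.Nonempty := by
            refine ⟨⟨k-1, by omega⟩, ?_⟩
            rw [hDf]
            simp
            omega
          have hdisj : Disjoint Cf Df := by
            rw [Finset.disjoint_left]
            intro i hi hi'
            rw [hCf] at hi
            rw [hDf] at hi'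
            simp at hi hi'
            omega
          have hsplitset : {ω' : Fin n → Fin k | t ≤ EmpBound.cT (empDist ω') p Cf Df} ⊆
              {ω' : Fin n → Fin k | t ≤ EmpBound.cT (empDist ω') p Cf Df ∧
                (EmpBound.cnt Df ω' : ℝ) * EmpBound.SS p Cf
                  ≤ (EmpBound.cnt Cf ω' : ℝ) * EmpBound.SS p Df} ∪
              {ω' : Fin n → Fin k | t ≤ EmpBound.cT (empDist ω') p Df Cf ∧
                (EmpBound.cnt Cf ω' : ℝ) * EmpBound.SS p Df
                  ≤ (EmpBound.cnt Df ω' : ℝ) * EmpBound.SS p Cf} := by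
            intro ω hω
            rcases le_total ((EmpBound.cnt Df ω : ℝ) * EmpBound.SS p Cf)
              ((EmpBound.cnt Cf ω : ℝ) * EmpBound.SS p Df) with h | h
            · exact Or.inl ⟨hω, h⟩
            · refine Or.inr ⟨?_, h⟩
              rw [EmpBound.cT_symm]
              exact hω
          calc probOf p {ω' : Fin n → Fin k | t ≤ EmpBound.cT (empDist ω') p Cf Df}
              ≤ probOf p ({ω' : Fin n → Fin k | t ≤ EmpBound.cT (empDist ω') p Cf Df ∧
                  (EmpBound.cnt Df ω' : ℝ) * EmpBound.SS p Cf
                    ≤ (EmpBound.cnt Cf ω' : ℝ) * EmpBound.SS p Df} ∪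
                {ω' : Fin n → Fin k | t ≤ EmpBound.cT (empDist ω') p Df Cf ∧
                  (EmpBound.cnt Cf ω' : ℝ) * EmpBound.SS p Df
                    ≤ (EmpBound.cnt Df ω' : ℝ) * EmpBound.SS p Cf}) :=
                EmpBound.probOf_mono p hp0 hsplitset
            _ ≤ probOf p {ω' : Fin n → Fin k | t ≤ EmpBound.cT (empDist ω') p Cf Df ∧
                  (EmpBound.cnt Df ω' : ℝ) * EmpBound.SS p Cf
                    ≤ (EmpBound.cnt Cf ω' : ℝ) * EmpBound.SS p Df}
                + probOf p {ω' : Fin n → Fin k | t ≤ EmpBound.cT (empDist ω') p Df Cf ∧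
                  (EmpBound.cnt Cf ω' : ℝ) * EmpBound.SS p Df
                    ≤ (EmpBound.cnt Df ω' : ℝ) * EmpBound.SS p Cf} :=
                EmpBound.probOf_union_le p hp0 _ _
            _ ≤ Real.exp (-(n:ℝ) * t) + Real.exp (-(n:ℝ) * t) := by
                gcongr
                · exact EmpBound.cher hn p hpos hsum Cf Df hdisj hCne hDne t ht
                · exact EmpBound.cher hn p hpos hsum Df Cf hdisj.symm hDne hCne t ht
            _ = 2 * Real.exp (-(n:ℝ) * t) := by ring
      _ = 2 * ((k : ℝ) - 1) * Real.exp (-(n : ℝ) * s / ((k : ℝ) - 1)) := by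
          rw [Finset.sum_const, Finset.card_range, nsmul_eq_mul, hkcast, htdef]
          rw [mul_div_assoc]
          ring
end

section
/- Let k = 2, let P = (p, 1−p) with 0 < p < 1, and let n ≥ 1. Then for every real ε > 0, P(D(P̂_{n,2}‖P) ≥ ε) ≤ 2e^{−nε}. -/
/-! ### Auxiliary definitions and lemmas -/

/-- Number of coordinates equal to `0`. -/
noncomputable def cnt0 {n : ℕ} (ω : Fin n → Fin 2) : ℕ :=
  (Finset.univ.filter (fun j => ω j = 0)).card

lemma cnt0_le {n : ℕ} (ω : Fin n → Fin 2) : cnt0 ω ≤ n := by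
  classical
  simpa [cnt0] using (Finset.card_filter_le Finset.univ (fun j => ω j = 0)).trans
    (le_of_eq (by simp))

lemma cnt1_eq {n : ℕ} (ω : Fin n → Fin 2) :
    (Finset.univ.filter (fun j => ω j = 1)).card = n - cnt0 ω := by
  classical
  have h : (Finset.univ.filter (fun j => ω j = 1)) =
      Finset.univ \ (Finset.univ.filter (fun j => ω j = 0)) := by
    rw [← Finset.filter_not]
    apply Finset.filter_congr
    intro j _
    constructor
    · intro h; simp [h]
    · intro h; omega
  rw [h, Finset.card_sdiff_of_subset (Finset.filter_subset _ _)]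
  simp [cnt0]

lemma KLaux_prod_eq {n : ℕ} (r : ℝ) (ω : Fin n → Fin 2) :
    ∏ j, ![r, 1-r] (ω j) = r ^ cnt0 ω * (1-r) ^ (n - cnt0 ω) := by
  classical
  rw [← Finset.prod_filter_mul_prod_filter_not Finset.univ (fun j => ω j = 0)]
  congr 1
  · rw [Finset.prod_congr rfl (fun j hj => ?_), Finset.prod_const]
    · rfl
    · simp only [Finset.mem_filter] at hj
      rw [hj.2]; rfl
  · rw [Finset.prod_congr rfl (fun j hj => ?_), Finset.prod_const]
    · rw [← cnt1_eq]
      congr 2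
      apply Finset.filter_congr
      intro j _; constructor
      · intro h; omega
      · intro h; simp [h]
    · simp only [Finset.mem_filter] at hj
      have : ω j = 1 := by omega
      rw [this]; rfl

lemma KLaux_sum_prod_one (n : ℕ) (r : ℝ) :
    ∑ ω : Fin n → Fin 2, ∏ j, ![r,1-r] (ω j) = 1 := by
  classical
  rw [← Fintype.piFinset_univ, ← Finset.prod_univ_sum]
  simp [Fin.sum_univ_two]

/-- The KL divergence of the empirical distribution as a function of the count. -/
noncomputable def fKL (n : ℕ) (p : ℝ) (m : ℕ) : ℝ :=
  ((m:ℝ)/n) * Real.log (((m:ℝ)/n)/p) + (((n-m:ℕ):ℝ)/n) * Real.log ((((n-m:ℕ):ℝ)/n)/(1-p))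

lemma KLaux_klDiv_eq {n : ℕ} (p : ℝ) (ω : Fin n → Fin 2) :
    klDiv (empDist ω) ![p, 1-p] = fKL n p (cnt0 ω) := by
  classical
  rw [klDiv, Fin.sum_univ_two, fKL]
  have h0 : empDist ω 0 = (cnt0 ω : ℝ)/n := rfl
  have h1 : empDist ω 1 = ((n - cnt0 ω : ℕ):ℝ)/n := by
    rw [empDist, cnt1_eq]
  rw [h0, h1]
  rfl

lemma KLaux_fKL_eq (n m : ℕ) (p : ℝ) (hmn : m ≤ n) (hn : 1 ≤ n) :
    fKL n p m = ((m:ℝ)/n) * Real.log (((m:ℝ)/n)/p)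
      + (1 - (m:ℝ)/n) * Real.log ((1 - (m:ℝ)/n)/(1-p)) := by
  have hn0 : (0:ℝ) < n := by exact_mod_cast hn
  have h2 : ((n-m:ℕ):ℝ)/n = 1 - (m:ℝ)/n := by
    rw [Nat.cast_sub hmn]; field_simp
  rw [fKL, h2]

/-- Core pointwise bound (change of measure / Chernoff, with integer exponents). -/
lemma KLaux_core (n m0 m : ℕ) (p q D : ℝ) (hp0 : 0 < p) (hpq : p ≤ q) (hq1 : q ≤ 1)
    (hm0 : (m0:ℝ) = n * q)
    (hD : D = q * Real.log (q/p) + (1-q) * Real.log ((1-q)/(1-p)))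
    (h1 : m0 ≤ m) (h2 : m ≤ n) :
    p^m * (1-p)^(n-m) ≤ q^m * (1-q)^(n-m) * Real.exp (-(n:ℝ) * D) := by
  have hq0 : 0 < q := lt_of_lt_of_le hp0 hpq
  rcases eq_or_lt_of_le hq1 with h1q | hqlt
  · subst h1q
    have hm0n : m0 = n := by exact_mod_cast hm0.trans (mul_one _)
    have hmn : m = n := le_antisymm h2 (hm0n ▸ h1)
    subst hmn
    have hD' : D = - Real.log p := by
      rw [hD]; simp [Real.log_div one_ne_zero (ne_of_gt hp0)]
    rw [hD']
    simp [Nat.sub_self, neg_mul_neg, Real.exp_nat_mul, Real.exp_log hp0]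
  · have h1q0 : 0 < 1 - q := by linarith
    have h1p0 : 0 < 1 - p := by linarith
    set a : ℝ := p / q with ha
    set b : ℝ := (1-p)/(1-q) with hb
    have ha0 : 0 < a := div_pos hp0 hq0
    have hb0 : 0 < b := div_pos h1p0 h1q0
    have hab : a ≤ b := by
      rw [ha, hb, div_le_div_iff₀ hq0 h1q0]; nlinarith
    have hm0n : m0 ≤ n := le_trans h1 h2
    have hcast : ((n - m0 : ℕ) : ℝ) = n * (1 - q) := by
      rw [Nat.cast_sub hm0n, hm0]; ring
    have hexp : Real.exp (-(n:ℝ) * D) = a^m0 * b^(n-m0) := by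
      rw [hD]
      have e1 : -(n:ℝ) * (q * Real.log (q/p) + (1-q) * Real.log ((1-q)/(1-p)))
          = (m0:ℝ) * Real.log a + ((n-m0:ℕ):ℝ) * Real.log b := by
        rw [hcast, hm0, ha, hb]
        rw [Real.log_div (ne_of_gt hq0) (ne_of_gt hp0),
            Real.log_div (ne_of_gt h1q0) (ne_of_gt h1p0),
            Real.log_div (ne_of_gt hp0) (ne_of_gt hq0),
            Real.log_div (ne_of_gt h1p0) (ne_of_gt h1q0)]
        ring
      rw [e1, Real.exp_add, Real.exp_nat_mul, Real.exp_nat_mul,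
          Real.exp_log ha0, Real.exp_log hb0]
    rw [hexp]
    have hpe : p = a * q := by rw [ha, div_mul_cancel₀ _ (ne_of_gt hq0)]
    have h1pe : (1:ℝ) - p = b * (1-q) := by rw [hb, div_mul_cancel₀ _ (ne_of_gt h1q0)]
    have key : a^(m-m0) ≤ b^(m-m0) := pow_le_pow_left₀ ha0.le hab _
    have ea : a^m = a^m0 * a^(m-m0) := by rw [← pow_add]; congr 1; omega
    have eb : b^(n-m0) = b^(n-m) * b^(m-m0) := by rw [← pow_add]; congr 1; omega
    calc p^m * (1-p)^(n-m) = (a^m * b^(n-m)) * (q^m * (1-q)^(n-m)) := by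
          rw [h1pe, hpe, mul_pow, mul_pow]; ring
      _ ≤ (a^m0 * b^(n-m0)) * (q^m * (1-q)^(n-m)) := by
          apply mul_le_mul_of_nonneg_right _ (by positivity)
          rw [ea, eb]
          calc a^m0 * a^(m-m0) * b^(n-m) ≤ a^m0 * b^(m-m0) * b^(n-m) := by
                have := mul_le_mul_of_nonneg_left key (le_of_lt (pow_pos ha0 m0))
                nlinarith [pow_pos hb0 (n-m), pow_pos ha0 m0]
            _ = a^m0 * (b^(n-m) * b^(m-m0)) := by ring
      _ = q^m * (1-q)^(n-m) * (a^m0 * b^(n-m0)) := by ring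

open Classical in
lemma KLaux_side_upper (n : ℕ) (hn : 1 ≤ n) (p ε : ℝ) (hp0 : 0 < p) (hp1 : p < 1)
    (hε : 0 < ε) :
    (∑ ω : Fin n → Fin 2,
        if ε ≤ fKL n p (cnt0 ω) ∧ p * n ≤ (cnt0 ω : ℝ) then ∏ j, ![p,1-p] (ω j) else 0)
      ≤ Real.exp (-(n:ℝ) * ε) := by
  classical
  have hn0 : (0:ℝ) < n := by exact_mod_cast hn
  set S := (Finset.range (n+1)).filter (fun m => ε ≤ fKL n p m ∧ p * n ≤ (m:ℝ)) with hSdef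
  by_cases hSne : S.Nonempty
  · set m0 := S.min' hSne with hm0def
    have hm0S : m0 ∈ S := S.min'_mem hSne
    rw [hSdef, Finset.mem_filter, Finset.mem_range] at hm0S
    have hm0n : m0 ≤ n := by omega
    have hεf : ε ≤ fKL n p m0 := hm0S.2.1
    have hpm : p * n ≤ (m0:ℝ) := hm0S.2.2
    set q : ℝ := (m0:ℝ)/n with hq
    have hpq : p ≤ q := by rw [hq, le_div_iff₀ hn0]; linarith
    have hq1 : q ≤ 1 := by rw [hq, div_le_one hn0]; exact_mod_cast hm0n
    have hq0 : 0 < q := lt_of_lt_of_le hp0 hpq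
    have h1q0 : 0 ≤ 1 - q := by linarith
    have hqm : (m0:ℝ) = n * q := by rw [hq]; field_simp
    have hDe : fKL n p m0 = q * Real.log (q/p) + (1-q) * Real.log ((1-q)/(1-p)) := by
      rw [KLaux_fKL_eq n m0 p hm0n hn]
    calc (∑ ω : Fin n → Fin 2,
            if ε ≤ fKL n p (cnt0 ω) ∧ p * n ≤ (cnt0 ω : ℝ) then ∏ j, ![p,1-p] (ω j) else 0)
        ≤ ∑ ω : Fin n → Fin 2,
            (q ^ cnt0 ω * (1-q) ^ (n - cnt0 ω)) * Real.exp (-(n:ℝ)*ε) := by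
          apply Finset.sum_le_sum
          intro ω _
          have hnn : 0 ≤ (q ^ cnt0 ω * (1-q) ^ (n - cnt0 ω)) * Real.exp (-(n:ℝ)*ε) :=
            mul_nonneg (mul_nonneg (pow_nonneg hq0.le _) (pow_nonneg h1q0 _))
              (Real.exp_nonneg _)
          split_ifs with h
          · have hmem : cnt0 ω ∈ S := by
              rw [hSdef, Finset.mem_filter, Finset.mem_range]
              exact ⟨by have := cnt0_le ω; omega, h⟩
            have hle : m0 ≤ cnt0 ω := S.min'_le _ hmem
            rw [KLaux_prod_eq]
            calc p ^ cnt0 ω * (1-p) ^ (n - cnt0 ω)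
                ≤ q ^ cnt0 ω * (1-q) ^ (n - cnt0 ω) * Real.exp (-(n:ℝ) * fKL n p m0) :=
                  KLaux_core n m0 (cnt0 ω) p q _ hp0 hpq hq1 hqm hDe hle (cnt0_le ω)
              _ ≤ (q ^ cnt0 ω * (1-q) ^ (n - cnt0 ω)) * Real.exp (-(n:ℝ)*ε) := by
                  apply mul_le_mul_of_nonneg_left (Real.exp_le_exp.2 (by nlinarith))
                    (mul_nonneg (pow_nonneg hq0.le _) (pow_nonneg h1q0 _))
          · exact hnn
      _ = (∑ ω : Fin n → Fin 2, ∏ j, ![q,1-q] (ω j)) * Real.exp (-(n:ℝ)*ε) := by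
          rw [Finset.sum_mul]
          apply Finset.sum_congr rfl
          intro ω _
          rw [KLaux_prod_eq]
      _ = Real.exp (-(n:ℝ)*ε) := by rw [KLaux_sum_prod_one, one_mul]
  · rw [Finset.sum_eq_zero]
    · exact Real.exp_nonneg _
    · intro ω _
      rw [if_neg]
      intro h
      exact hSne ⟨cnt0 ω, by
        rw [hSdef, Finset.mem_filter, Finset.mem_range]
        exact ⟨by have := cnt0_le ω; omega, h⟩⟩

open Classical in
lemma KLaux_side_lower (n : ℕ) (hn : 1 ≤ n) (p ε : ℝ) (hp0 : 0 < p) (hp1 : p < 1)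
    (hε : 0 < ε) :
    (∑ ω : Fin n → Fin 2,
        if ε ≤ fKL n p (cnt0 ω) ∧ (cnt0 ω : ℝ) < p * n then ∏ j, ![p,1-p] (ω j) else 0)
      ≤ Real.exp (-(n:ℝ) * ε) := by
  classical
  have hn0 : (0:ℝ) < n := by exact_mod_cast hn
  set S := (Finset.range (n+1)).filter (fun m => ε ≤ fKL n p m ∧ (m:ℝ) < p * n) with hSdef
  by_cases hSne : S.Nonempty
  · set m1 := S.max' hSne with hm1def
    have hm1S : m1 ∈ S := S.max'_mem hSne
    rw [hSdef, Finset.mem_filter, Finset.mem_range] at hm1S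
    have hm1n : m1 ≤ n := by omega
    have hεf : ε ≤ fKL n p m1 := hm1S.2.1
    have hpm : (m1:ℝ) < p * n := hm1S.2.2
    set q : ℝ := (m1:ℝ)/n with hq
    have hqp : q ≤ p := by rw [hq, div_le_iff₀ hn0]; linarith
    have hq0 : 0 ≤ q := by positivity
    have h1p0 : 0 < 1 - p := by linarith
    have hpq' : 1 - p ≤ 1 - q := by linarith
    have hq1' : 1 - q ≤ 1 := by linarith
    have hqm : ((n - m1 : ℕ):ℝ) = n * (1 - q) := by
      rw [Nat.cast_sub hm1n, hq]; field_simp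
    have hDe : fKL n p m1 = (1-q) * Real.log ((1-q)/(1-p))
        + (1-(1-q)) * Real.log ((1-(1-q))/(1-(1-p))) := by
      rw [show (1:ℝ)-(1-q) = q from by ring, show (1:ℝ)-(1-p) = p from by ring,
        KLaux_fKL_eq n m1 p hm1n hn]
      ring
    calc (∑ ω : Fin n → Fin 2,
            if ε ≤ fKL n p (cnt0 ω) ∧ (cnt0 ω : ℝ) < p * n then ∏ j, ![p,1-p] (ω j) else 0)
        ≤ ∑ ω : Fin n → Fin 2,
            (q ^ cnt0 ω * (1-q) ^ (n - cnt0 ω)) * Real.exp (-(n:ℝ)*ε) := by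
          apply Finset.sum_le_sum
          intro ω _
          have hnn : 0 ≤ (q ^ cnt0 ω * (1-q) ^ (n - cnt0 ω)) * Real.exp (-(n:ℝ)*ε) :=
            mul_nonneg (mul_nonneg (pow_nonneg hq0 _) (pow_nonneg (by linarith) _))
              (Real.exp_nonneg _)
          split_ifs with h
          · have hmem : cnt0 ω ∈ S := by
              rw [hSdef, Finset.mem_filter, Finset.mem_range]
              exact ⟨by have := cnt0_le ω; omega, h⟩
            have hle : cnt0 ω ≤ m1 := S.le_max' _ hmem
            have hcn : cnt0 ω ≤ n := cnt0_le ω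
            have key := KLaux_core n (n - m1) (n - cnt0 ω) (1-p) (1-q) (fKL n p m1)
              h1p0 hpq' hq1' hqm hDe (by omega) (by omega)
            rw [show (1:ℝ)-(1-p) = p from by ring, show (1:ℝ)-(1-q) = q from by ring,
              show n - (n - cnt0 ω) = cnt0 ω from by omega] at key
            rw [KLaux_prod_eq]
            calc p ^ cnt0 ω * (1-p) ^ (n - cnt0 ω)
                = (1-p) ^ (n - cnt0 ω) * p ^ cnt0 ω := by ring
              _ ≤ (1-q) ^ (n - cnt0 ω) * q ^ cnt0 ω * Real.exp (-(n:ℝ) * fKL n p m1) := key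
              _ ≤ (q ^ cnt0 ω * (1-q) ^ (n - cnt0 ω)) * Real.exp (-(n:ℝ)*ε) := by
                  rw [show (1-q) ^ (n - cnt0 ω) * q ^ cnt0 ω
                      = q ^ cnt0 ω * (1-q) ^ (n - cnt0 ω) from by ring]
                  apply mul_le_mul_of_nonneg_left (Real.exp_le_exp.2 (by nlinarith))
                    (mul_nonneg (pow_nonneg hq0 _) (pow_nonneg (by linarith) _))
          · exact hnn
      _ = (∑ ω : Fin n → Fin 2, ∏ j, ![q,1-q] (ω j)) * Real.exp (-(n:ℝ)*ε) := by
          rw [Finset.sum_mul]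
          apply Finset.sum_congr rfl
          intro ω _
          rw [KLaux_prod_eq]
      _ = Real.exp (-(n:ℝ)*ε) := by rw [KLaux_sum_prod_one, one_mul]
  · rw [Finset.sum_eq_zero]
    · exact Real.exp_nonneg _
    · intro ω _
      rw [if_neg]
      intro h
      exact hSne ⟨cnt0 ω, by
        rw [hSdef, Finset.mem_filter, Finset.mem_range]
        exact ⟨by have := cnt0_le ω; omega, h⟩⟩

/-- Lemma 10 (binary alphabet): for `P = (p, 1−p)` with `0 < p < 1`,
`P(D(P̂_{n,2}‖P) ≥ ε) ≤ 2e^{−nε}`. -/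
theorem kl_concentration_binary (n : ℕ) (hn : 1 ≤ n)
    (p : ℝ) (hp0 : 0 < p) (hp1 : p < 1) (ε : ℝ) (hε : 0 < ε) :
    probOf ![p, 1 - p] {ω : Fin n → Fin 2 | ε ≤ klDiv (empDist ω) ![p, 1 - p]} ≤
      2 * Real.exp (-(n : ℝ) * ε) := by
  classical
  have hfac : ∀ i : Fin 2, 0 ≤ (![p, 1-p] : Fin 2 → ℝ) i := by
    intro i
    fin_cases i <;> simp <;> linarith
  calc probOf ![p, 1 - p] {ω : Fin n → Fin 2 | ε ≤ klDiv (empDist ω) ![p, 1 - p]}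
      ≤ (∑ ω : Fin n → Fin 2,
          if ε ≤ fKL n p (cnt0 ω) ∧ p * n ≤ (cnt0 ω : ℝ) then ∏ j, ![p,1-p] (ω j) else 0)
        + (∑ ω : Fin n → Fin 2,
          if ε ≤ fKL n p (cnt0 ω) ∧ (cnt0 ω : ℝ) < p * n then ∏ j, ![p,1-p] (ω j) else 0) := by
        rw [probOf, ← Finset.sum_add_distrib]
        apply Finset.sum_le_sum
        intro ω _
        have hprod : 0 ≤ ∏ j, ![p,1-p] (ω j) := Finset.prod_nonneg (fun j _ => hfac (ω j))
        have hite : ∀ (c : Prop) [Decidable c],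
            0 ≤ (if c then ∏ j, ![p,1-p] (ω j) else 0) := by
          intro c _; split_ifs; exacts [hprod, le_rfl]
        by_cases hE : ω ∈ {ω : Fin n → Fin 2 | ε ≤ klDiv (empDist ω) ![p, 1 - p]}
        · have hε' : ε ≤ fKL n p (cnt0 ω) := by
            rw [← KLaux_klDiv_eq p ω]; exact hE
          rcases le_or_gt (p*n) ((cnt0 ω : ℝ)) with h | h
          · rw [if_pos hE, if_pos ⟨hε', h⟩]
            exact le_add_of_nonneg_right (hite _)
          · rw [if_pos hE, if_pos (show ε ≤ fKL n p (cnt0 ω) ∧ ((cnt0 ω : ℝ)) < p * (n:ℝ)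
              from ⟨hε', h⟩)]
            exact le_add_of_nonneg_left (hite _)
        · rw [if_neg hE]
          exact add_nonneg (hite _) (hite _)
    _ ≤ Real.exp (-(n:ℝ)*ε) + Real.exp (-(n:ℝ)*ε) :=
        add_le_add (KLaux_side_upper n hn p ε hp0 hp1 hε)
          (KLaux_side_lower n hn p ε hp0 hp1 hε)
    _ = 2 * Real.exp (-(n : ℝ) * ε) := by ring
end

section
/- For every index i, with X_i = (p̂_i − p_i)²/p_i − (1 − p_i)/n, one has E[X_i²] = (1 − p_i)·(1 + 2(n−3)·p_i·(1 − p_i))/(n³·p_i). -/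
section Aux
variable {k : ℕ} (p : Fin k → ℝ) (i : Fin k)

def cnt {n : ℕ} (i : Fin k) (ω : Fin n → Fin k) : ℕ :=
  (Finset.univ.filter (fun j => ω j = i)).card

lemma total (hsum : ∑ a, p a = 1) (n : ℕ) :
    ∑ ω : Fin n → Fin k, ∏ j, p (ω j) = 1 := by
  rw [← Fintype.sum_pow p n, hsum, one_pow]

lemma expect_poly (hsum : ∑ a, p a = 1) {n : ℕ} (c0 c1 c2 c3 c4 : ℝ) :
    expect p (fun ω : Fin n → Fin k =>
      c0 + c1 * (cnt i ω : ℝ) + c2 * (cnt i ω : ℝ)^2 + c3 * (cnt i ω : ℝ)^3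
        + c4 * (cnt i ω : ℝ)^4) =
    c0 + c1 * expect p (fun ω : Fin n → Fin k => (cnt i ω : ℝ))
      + c2 * expect p (fun ω : Fin n → Fin k => (cnt i ω : ℝ)^2)
      + c3 * expect p (fun ω : Fin n → Fin k => (cnt i ω : ℝ)^3)
      + c4 * expect p (fun ω : Fin n → Fin k => (cnt i ω : ℝ)^4) := by
  simp only [expect, mul_add, Finset.sum_add_distrib, Finset.mul_sum]
  rw [← Finset.sum_mul, total p hsum n]
  congr 1
  · congr 1
    · congr 1
      · congr 1
        · ring
        · exact Finset.sum_congr rfl (fun ω _ => by ring)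
      · exact Finset.sum_congr rfl (fun ω _ => by ring)
    · exact Finset.sum_congr rfl (fun ω _ => by ring)
  · exact Finset.sum_congr rfl (fun ω _ => by ring)

lemma cnt_cons {n : ℕ} (a : Fin k) (ω : Fin n → Fin k) :
    cnt i (Fin.cons a ω) = (if a = i then 1 else 0) + cnt i ω := by
  simp only [cnt, Finset.card_filter, Fin.sum_univ_succ, Fin.cons_zero, Fin.cons_succ]

lemma expect_succ (n : ℕ) (g : ℕ → ℝ) :
    expect p (fun ω : Fin (n+1) → Fin k => g (cnt i ω)) =
      p i * expect p (fun ω : Fin n → Fin k => g (cnt i ω + 1))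
      + (∑ a, p a - p i) * expect p (fun ω : Fin n → Fin k => g (cnt i ω)) := by
  classical
  rw [expect, ← Equiv.sum_comp (Fin.consEquiv (fun _ : Fin (n+1) => Fin k))
      (fun ω => (∏ j, p (ω j)) * g (cnt i ω))]
  rw [Fintype.sum_prod_type]
  have key : ∀ (a : Fin k) (ω : Fin n → Fin k),
      (∏ j, p ((Fin.consEquiv (fun _ => Fin k)) (a, ω) j)) *
        g (cnt i ((Fin.consEquiv (fun _ => Fin k)) (a, ω))) =
      p a * ((∏ j, p (ω j)) * g (cnt i ω + (if a = i then 1 else 0))) := by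
    intro a ω
    have h1 : ((Fin.consEquiv (fun _ : Fin (n+1) => Fin k)) (a, ω)) = Fin.cons a ω := rfl
    rw [h1, Fin.prod_univ_succ, Fin.cons_zero, cnt_cons,
      add_comm (if a = i then 1 else 0) (cnt i ω)]
    simp only [Fin.cons_succ]
    ring
  simp only [key]
  have split : ∀ a : Fin k,
      ∑ ω : Fin n → Fin k, p a * ((∏ j, p (ω j)) * g (cnt i ω + (if a = i then 1 else 0))) =
      p a * expect p (fun ω : Fin n → Fin k => g (cnt i ω))
        + (if a = i then p a * (expect p (fun ω : Fin n → Fin k => g (cnt i ω + 1))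
            - expect p (fun ω : Fin n → Fin k => g (cnt i ω))) else 0) := by
    intro a
    by_cases h : a = i
    · subst h
      simp only [eq_self_iff_true, if_true]
      have hr : p a * expect p (fun ω : Fin n → Fin k => g (cnt a ω))
          + p a * (expect p (fun ω : Fin n → Fin k => g (cnt a ω + 1))
            - expect p (fun ω : Fin n → Fin k => g (cnt a ω)))
          = p a * expect p (fun ω : Fin n → Fin k => g (cnt a ω + 1)) := by ring
      rw [hr, expect, Finset.mul_sum]
    · simp only [if_neg h, add_zero, expect, Finset.mul_sum]
  simp only [split]
  rw [Finset.sum_add_distrib, Finset.sum_ite_eq' Finset.univ i, ← Finset.sum_mul]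
  simp only [Finset.mem_univ, if_true]
  ring

lemma moments (hsum : ∑ a, p a = 1) (n : ℕ) :
    expect p (fun ω : Fin n → Fin k => (cnt i ω : ℝ)) = n * p i ∧
    expect p (fun ω : Fin n → Fin k => (cnt i ω : ℝ)^2)
      = n * p i + n * ((n:ℝ)-1) * p i^2 ∧
    expect p (fun ω : Fin n → Fin k => (cnt i ω : ℝ)^3)
      = n * ((n:ℝ)-1) * ((n:ℝ)-2) * p i^3 + 3 * n * ((n:ℝ)-1) * p i^2 + n * p i ∧
    expect p (fun ω : Fin n → Fin k => (cnt i ω : ℝ)^4)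
      = n * ((n:ℝ)-1) * ((n:ℝ)-2) * ((n:ℝ)-3) * p i^4
        + 6 * n * ((n:ℝ)-1) * ((n:ℝ)-2) * p i^3 + 7 * n * ((n:ℝ)-1) * p i^2 + n * p i := by
  induction n with
  | zero =>
    have hc : ∀ ω : Fin 0 → Fin k, cnt i ω = 0 := by
      intro ω; simp [cnt]
    refine ⟨?_, ?_, ?_, ?_⟩ <;> simp [expect, hc]
  | succ n ih =>
    obtain ⟨h1, h2, h3, h4⟩ := ih
    have e1 := expect_succ p i n (fun c => (c : ℝ))
    have e2 := expect_succ p i n (fun c => (c : ℝ)^2)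
    have e3 := expect_succ p i n (fun c => (c : ℝ)^3)
    have e4 := expect_succ p i n (fun c => (c : ℝ)^4)
    rw [hsum] at e1 e2 e3 e4
    have p1 : expect p (fun ω : Fin n → Fin k => ((cnt i ω + 1 : ℕ) : ℝ)) =
        expect p (fun ω : Fin n → Fin k => 1 + 1 * (cnt i ω : ℝ) + 0 * (cnt i ω : ℝ)^2
          + 0 * (cnt i ω : ℝ)^3 + 0 * (cnt i ω : ℝ)^4) := by
      congr 1; funext ω; push_cast; ring
    have p2 : expect p (fun ω : Fin n → Fin k => ((cnt i ω + 1 : ℕ) : ℝ)^2) =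
        expect p (fun ω : Fin n → Fin k => 1 + 2 * (cnt i ω : ℝ) + 1 * (cnt i ω : ℝ)^2
          + 0 * (cnt i ω : ℝ)^3 + 0 * (cnt i ω : ℝ)^4) := by
      congr 1; funext ω; push_cast; ring
    have p3 : expect p (fun ω : Fin n → Fin k => ((cnt i ω + 1 : ℕ) : ℝ)^3) =
        expect p (fun ω : Fin n → Fin k => 1 + 3 * (cnt i ω : ℝ) + 3 * (cnt i ω : ℝ)^2
          + 1 * (cnt i ω : ℝ)^3 + 0 * (cnt i ω : ℝ)^4) := by
      congr 1; funext ω; push_cast; ring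
    have p4 : expect p (fun ω : Fin n → Fin k => ((cnt i ω + 1 : ℕ) : ℝ)^4) =
        expect p (fun ω : Fin n → Fin k => 1 + 4 * (cnt i ω : ℝ) + 6 * (cnt i ω : ℝ)^2
          + 4 * (cnt i ω : ℝ)^3 + 1 * (cnt i ω : ℝ)^4) := by
      congr 1; funext ω; push_cast; ring
    rw [p1, expect_poly p i hsum] at e1
    rw [p2, expect_poly p i hsum] at e2
    rw [p3, expect_poly p i hsum] at e3
    rw [p4, expect_poly p i hsum] at e4
    rw [h1, h2, h3, h4] at e1 e2 e3 e4
    refine ⟨?_, ?_, ?_, ?_⟩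
    · rw [e1]; push_cast; ring
    · rw [e2]; push_cast; ring
    · rw [e3]; push_cast; ring
    · rw [e4]; push_cast; ring

end Aux

theorem quadratic_second_moment' (n k : ℕ) (hn : 1 ≤ n) (hk : 2 ≤ k)
    (p : Fin k → ℝ) (hpos : ∀ i, 0 < p i) (hsum : ∑ i, p i = 1) (i : Fin k) :
    expect p (fun ω : Fin n → Fin k =>
        (((cnt i ω : ℝ) / n - p i) ^ 2 / p i - (1 - p i) / n) ^ 2) =
      (1 - p i) * (1 + 2 * ((n : ℝ) - 3) * p i * (1 - p i)) / ((n : ℝ) ^ 3 * p i) := by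
  have hn0 : (n : ℝ) ≠ 0 := by positivity
  have hp0 : p i ≠ 0 := ne_of_gt (hpos i)
  set P := p i with hP
  set nn := (n : ℝ) with hnn
  set α : ℝ := 1 / (nn ^ 2 * P) with hα
  set β : ℝ := -2 / nn with hβ
  set γ : ℝ := P - (1 - P) / nn with hγ
  have key : (fun ω : Fin n → Fin k =>
      (((cnt i ω : ℝ) / nn - P) ^ 2 / P - (1 - P) / nn) ^ 2) =
      (fun ω : Fin n → Fin k =>
        γ ^ 2 + (2 * β * γ) * (cnt i ω : ℝ) + (β ^ 2 + 2 * α * γ) * (cnt i ω : ℝ) ^ 2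
          + (2 * α * β) * (cnt i ω : ℝ) ^ 3 + α ^ 2 * (cnt i ω : ℝ) ^ 4) := by
    funext ω
    rw [hα, hβ, hγ]
    field_simp
    ring
  rw [key, expect_poly p i hsum]
  obtain ⟨h1, h2, h3, h4⟩ := moments p i hsum n
  rw [h1, h2, h3, h4, hα, hβ, hγ]
  field_simp
  ring

/-- Lemma 8, first moment identity: with `Xᵢ = (p̂ᵢ − pᵢ)²/pᵢ − (1 − pᵢ)/n`,
`E[Xᵢ²] = (1 − pᵢ)(1 + 2(n−3)pᵢ(1 − pᵢ))/(n³pᵢ)`. -/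
theorem quadratic_second_moment (n k : ℕ) (hn : 1 ≤ n) (hk : 2 ≤ k)
    (p : Fin k → ℝ) (hpos : ∀ i, 0 < p i) (hsum : ∑ i, p i = 1) (i : Fin k) :
    expect p (fun ω : Fin n → Fin k =>
        ((empDist ω i - p i) ^ 2 / p i - (1 - p i) / n) ^ 2) =
      (1 - p i) * (1 + 2 * ((n : ℝ) - 3) * p i * (1 - p i)) / ((n : ℝ) ^ 3 * p i) := by
  exact quadratic_second_moment' n k hn hk p hpos hsum i
end

section
/- For every nonnegative integer m with m ≠ 2, the function f(x) = (1−x)^{m/2}/√(x − x²) is convex on the open interval (0,1). -/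
/-!
On `(0, 1)` we have `√(x - x²) = √x · √(1 - x)`, so the integrand equals
`(√x)⁻¹ · (1 - x)^((m - 1)/2)`. For `m = 0` it is `1 / √(x - x²)`, the reciprocal of the square
root of a positive concave function, hence convex; for `m = 1` it is `(√x)⁻¹`; for `m ≥ 3` it is
a product of two nonnegative, convex, decreasing functions, which is convex because the factors
vary together.
-/

open Set Real

section Composition

variable {𝕜 E α β : Type*} [Semiring 𝕜] [PartialOrder 𝕜] [AddCommMonoid E] [AddCommMonoid α]
  [PartialOrder α] [AddCommMonoid β] [PartialOrder β] [SMul 𝕜 E] [SMul 𝕜 α] [SMul 𝕜 β]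
  {s : Set E} {t : Set β} {f : E → β} {g : β → α}

theorem ConcaveOn.comp_of_mapsTo (hg : ConcaveOn 𝕜 t g) (hf : ConcaveOn 𝕜 s f)
    (hg' : MonotoneOn g t) (hst : MapsTo f s t) : ConcaveOn 𝕜 s (g ∘ f) := by
  refine ⟨hf.1, fun x hx y hy a b ha hb hab ↦ ?_⟩
  calc a • g (f x) + b • g (f y) ≤ g (a • f x + b • f y) := hg.2 (hst hx) (hst hy) ha hb hab
    _ ≤ g (f (a • x + b • y)) :=
      hg' (hg.1 (hst hx) (hst hy) ha hb hab) (hst (hf.1 hx hy ha hb hab)) (hf.2 hx hy ha hb hab)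

theorem ConvexOn.comp_concaveOn_of_mapsTo (hg : ConvexOn 𝕜 t g) (hf : ConcaveOn 𝕜 s f)
    (hg' : AntitoneOn g t) (hst : MapsTo f s t) : ConvexOn 𝕜 s (g ∘ f) :=
  hg.dual.comp_of_mapsTo hf hg' hst

end Composition

theorem ConcaveOn.convexOn_inv_sqrt {E : Type*} [AddCommMonoid E] [Module ℝ E] {s : Set E}
    {f : E → ℝ} (hf : ConcaveOn ℝ s f) (hf₀ : ∀ x ∈ s, 0 < f x) :
    ConvexOn ℝ s fun x ↦ (√(f x))⁻¹ := by
  have hsqrt : ConcaveOn ℝ s fun x ↦ √(f x) :=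
    strictConcaveOn_sqrt.concaveOn.comp_of_mapsTo hf (fun _ _ _ _ ↦ Real.sqrt_le_sqrt)
      fun x hx ↦ (hf₀ x hx).le
  have hinv : ConvexOn ℝ (Ioi 0) fun y : ℝ ↦ y⁻¹ := by simpa using convexOn_zpow (𝕜 := ℝ) (-1)
  exact hinv.comp_concaveOn_of_mapsTo hsqrt (fun _ hy _ _ ↦ inv_anti₀ hy)
    fun x hx ↦ Real.sqrt_pos.2 (hf₀ x hx)

theorem convexOn_one_sub_rpow {p : ℝ} (hp : 1 ≤ p) :
    ConvexOn ℝ (Iic 1) fun x : ℝ ↦ (1 - x) ^ p := by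
  let reflect : ℝ →ᵃ[ℝ] ℝ := AffineMap.lineMap 1 0
  have hreflect (x : ℝ) : reflect x = 1 - x := by simp [reflect, AffineMap.lineMap_apply_ring']; ring
  have hpre : reflect ⁻¹' Ici 0 = Iic 1 := by ext x; simp [hreflect]
  have h := (convexOn_rpow hp).comp_affineMap reflect
  rw [hpre] at h
  exact h.congr fun x _ ↦ by simp [hreflect]

theorem one_sub_rpow_div_sqrt_sub_sq {x : ℝ} (hx : x ∈ Ioo 0 1) (p : ℝ) :
    (1 - x) ^ p / √(x - x ^ 2) = (√x)⁻¹ * (1 - x) ^ (p - 1 / 2) := by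
  have h1x : 0 < 1 - x := sub_pos.2 hx.2
  rw [show x - x ^ 2 = x * (1 - x) by ring, Real.sqrt_mul hx.1.le, Real.sqrt_eq_rpow (1 - x),
    Real.rpow_sub h1x, div_mul_eq_div_div_swap, div_eq_inv_mul]

theorem convexOn_inv_sqrt_sub_sq : ConvexOn ℝ (Ioo 0 1) fun x : ℝ ↦ (√(x - x ^ 2))⁻¹ := by
  have hconc : ConcaveOn ℝ (Ioo 0 1) fun x : ℝ ↦ x - x ^ 2 :=
    (concaveOn_id (convex_Ioo 0 1)).sub
      ((convexOn_pow 2).subset (fun _ hx ↦ hx.1.le) (convex_Ioo 0 1))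
  exact hconc.convexOn_inv_sqrt fun x hx ↦ by nlinarith [hx.1, hx.2]

theorem convexOn_inv_sqrt : ConvexOn ℝ (Ioi 0) fun x : ℝ ↦ (√x)⁻¹ :=
  (concaveOn_id (convex_Ioi 0)).convexOn_inv_sqrt fun _ hx ↦ hx

theorem convexOn_inv_sqrt_mul_one_sub_rpow {p : ℝ} (hp : 1 ≤ p) :
    ConvexOn ℝ (Ioo 0 1) fun x : ℝ ↦ (√x)⁻¹ * (1 - x) ^ p := by
  have hanti₁ : AntitoneOn (fun x : ℝ ↦ (√x)⁻¹) (Ioo 0 1) := fun x hx y _ hxy ↦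
    inv_anti₀ (Real.sqrt_pos.2 hx.1) (Real.sqrt_le_sqrt hxy)
  have hanti₂ : AntitoneOn (fun x : ℝ ↦ (1 - x) ^ p) (Ioo 0 1) := fun x _ y hy hxy ↦
    Real.rpow_le_rpow (sub_nonneg.2 hy.2.le) (by linarith) (by linarith)
  exact (convexOn_inv_sqrt.subset Ioo_subset_Ioi_self (convex_Ioo 0 1)).mul
    ((convexOn_one_sub_rpow hp).subset (fun x hx ↦ hx.2.le) (convex_Ioo 0 1))
    (fun x _ ↦ inv_nonneg.2 (Real.sqrt_nonneg x))
    (fun x hx ↦ Real.rpow_nonneg (sub_nonneg.2 hx.2.le) p)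
    (hanti₁.monovaryOn hanti₂)

/-- Lemma 12: for every nonnegative integer `m ≠ 2`, the function
`x ↦ (1−x)^{m/2}/√(x − x²)` is convex on `(0,1)`. -/
theorem convexity_of_integrand (m : ℕ) (hm : m ≠ 2) :
    ConvexOn ℝ (Set.Ioo (0 : ℝ) 1)
      (fun x : ℝ => (1 - x) ^ ((m : ℝ) / 2) / Real.sqrt (x - x ^ 2)) := by
  obtain rfl | rfl | hm₃ : m = 0 ∨ m = 1 ∨ 3 ≤ m := by omega
  · exact convexOn_inv_sqrt_sub_sq.congr fun x _ ↦ by simp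
  · refine (convexOn_inv_sqrt.subset Ioo_subset_Ioi_self (convex_Ioo 0 1)).congr fun x hx ↦ ?_
    rw [one_sub_rpow_div_sqrt_sub_sq hx]
    norm_num
  · have hp : 1 ≤ (m : ℝ) / 2 - 1 / 2 := by
      have : (3 : ℝ) ≤ m := by exact_mod_cast hm₃
      linarith
    exact (convexOn_inv_sqrt_mul_one_sub_rpow hp).congr fun x hx ↦
      (one_sub_rpow_div_sqrt_sub_sq hx _).symm
end
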